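/- arXiv:2602.04379 — 2 statements merged into one kernel-verified Lean document; each statement's English description precedes it below -/
import Mathlib

section
/- Let k be a positive integer, δ ≥ 2k+1, and G a connected graph of order n ≥ 6δ with minimum degree δ. If e(G) ≥ e(K_δ ∨ (K_{n-2δ+2k-1} ∪ (δ-2k+1)K_1)), then G is fractional k-extendable, unless G ≅ K_δ ∨ (K_{n-2δ+2k-1} ∪ (δ-2k+1)K_1). -/
open Finset

/-- The graph `K_a ∨ (K_b ∪ (n-a-b) K_1)` on vertex set `Fin n`:
first `a` vertices form the joined clique, next `b` form the second clique,
remaining vertices are the independent part. -/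
def jud (n a b : ℕ) : SimpleGraph (Fin n) where
  Adj u v := u ≠ v ∧ ((u : ℕ) < a ∨ (v : ℕ) < a ∨ ((u : ℕ) < a + b ∧ (v : ℕ) < a + b))
  symm := ⟨fun u v h => ⟨h.1.symm, by tauto⟩⟩
  loopless := ⟨fun u h => h.1 rfl⟩

instance (n a b : ℕ) : DecidableRel (jud n a b).Adj := fun u v =>
  inferInstanceAs (Decidable (u ≠ v ∧ ((u : ℕ) < a ∨ (v : ℕ) < a ∨ ((u : ℕ) < a + b ∧ (v : ℕ) < a + b))))

/-- A finite set of edges of `G` forming a matching (pairwise vertex-disjoint edges). -/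
def IsMatching {V : Type*} (G : SimpleGraph V) (M : Finset (Sym2 V)) : Prop :=
  (↑M : Set (Sym2 V)) ⊆ G.edgeSet ∧
    ∀ e ∈ M, ∀ f ∈ M, e ≠ f → ∀ v : V, v ∈ e → v ∉ f

/-- A fractional perfect matching of `G`. -/
def IsFPM {V : Type*} [Fintype V] [DecidableEq V] (G : SimpleGraph V)
    (h : Sym2 V → ℝ) : Prop :=
  (∀ e, 0 ≤ h e ∧ h e ≤ 1) ∧ (∀ e, e ∉ G.edgeSet → h e = 0) ∧
    ∀ v : V, ∑ e ∈ Finset.univ.filter (fun e : Sym2 V => v ∈ e), h e = 1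

/-- `G` is fractional `k`-extendable: it has a `k`-matching and every `k`-matching
extends to a fractional perfect matching assigning weight 1 to its edges. -/
def FracExt {V : Type*} [Fintype V] [DecidableEq V] (k : ℕ) (G : SimpleGraph V) : Prop :=
  (∃ M, IsMatching G M ∧ M.card = k) ∧
    ∀ M, IsMatching G M → M.card = k →
      ∃ h, IsFPM G h ∧ ∀ e ∈ M, h e = 1

/-- The largest eigenvalue (spectral radius, for the symmetric matrices considered here). -/
noncomputable def specRadius {n : ℕ} (M : Matrix (Fin n) (Fin n) ℝ) : ℝ :=
  sSup {t : ℝ | ∃ v : Fin n → ℝ, v ≠ 0 ∧ M.mulVec v = t • v}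

/-- Signless Laplacian spectral radius. -/
noncomputable def qRad {n : ℕ} (G : SimpleGraph (Fin n)) : ℝ := by
  classical exact specRadius (Matrix.of fun u v =>
    (if u = v then (G.degree u : ℝ) else 0) + (if G.Adj u v then 1 else 0))

/-- Distance spectral radius. -/
noncomputable def muRad {n : ℕ} (G : SimpleGraph (Fin n)) : ℝ :=
  specRadius (Matrix.of fun u v => (G.dist u v : ℝ))

/-- Wiener index (sum of pairwise distances). -/
noncomputable def wiener {n : ℕ} (G : SimpleGraph (Fin n)) : ℝ :=
  (∑ u : Fin n, ∑ v : Fin n, (G.dist u v : ℝ)) / 2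


section myhelpers
variable {V : Type*} [Fintype V] [DecidableEq V]

def evs (e : Sym2 V) : Finset V := univ.filter (· ∈ e)

lemma evs_pair (x y : V) : evs s(x, y) = {x, y} := by
  ext v; simp [evs, Sym2.mem_iff]

lemma card_evs_le (e : Sym2 V) : (evs e).card ≤ 2 := by
  induction e using Sym2.inductionOn with
  | hf x y => rw [evs_pair]; exact (card_insert_le _ _).trans (by simp)

lemma fpm_of_perm (G : SimpleGraph V) (F : V → V) (hinj : Function.Injective F)
    (hadj : ∀ v, G.Adj v (F v)) :
    IsFPM G (fun e => ((univ.filter fun u => s(u, F u) = e).card : ℝ) / 2) := by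
  have hbij : Function.Bijective F := Finite.injective_iff_bijective.mp hinj
  refine ⟨?_, ?_, ?_⟩
  · intro e
    constructor
    · positivity
    · rw [div_le_one (by norm_num)]
      have hsub : (univ.filter fun u => s(u, F u) = e) ⊆ evs e := by
        intro u hu
        simp only [mem_filter, mem_univ, true_and] at hu
        simp only [evs, mem_filter, mem_univ, true_and]
        rw [← hu]; exact Sym2.mem_mk_left _ _
      have := (card_le_card hsub).trans (card_evs_le e)
      exact_mod_cast this
  · intro e he
    have : (univ.filter fun u => s(u, F u) = e) = ∅ := by
      rw [filter_eq_empty_iff]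
      intro u _ hu
      exact he (hu ▸ (G.mem_edgeSet.mpr (hadj u)))
    simp [this]
  · intro v
    rw [← Finset.sum_div]
    have key : ∑ e ∈ univ.filter (fun e : Sym2 V => v ∈ e),
        ((univ.filter fun u => s(u, F u) = e).card : ℝ) = 2 := by
      have h1 : (univ.filter fun u : V => v ∈ s(u, F u)).card
          = ∑ e ∈ univ.filter (fun e : Sym2 V => v ∈ e),
            (Finset.filter (fun u => s(u, F u) = e) (univ.filter fun u : V => v ∈ s(u, F u))).card := by
        apply Finset.card_eq_sum_card_fiberwise
        intro u hu
        simp only [mem_coe, mem_filter, mem_univ, true_and] at hu ⊢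
        exact hu
      have h2 : ∀ e ∈ univ.filter (fun e : Sym2 V => v ∈ e),
          (Finset.filter (fun u => s(u, F u) = e) (univ.filter fun u : V => v ∈ s(u, F u)))
          = univ.filter fun u => s(u, F u) = e := by
        intro e he
        simp only [mem_filter, mem_univ, true_and] at he
        ext u
        simp only [mem_filter, mem_univ, true_and]
        constructor
        · rintro ⟨_, h⟩; exact h
        · intro h; exact ⟨h ▸ he, h⟩
      have h3 : (univ.filter fun u : V => v ∈ s(u, F u)) = {v, (Equiv.ofBijective F hbij).symm v} := by
        ext u
        simp only [mem_filter, mem_univ, true_and, Sym2.mem_iff, mem_insert, mem_singleton]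
        constructor
        · rintro (h | h)
          · exact Or.inl h.symm
          · right
            have hF : F u = v := h.symm
            have : (Equiv.ofBijective F hbij).symm v = u :=
              (Equiv.ofBijective F hbij).symm_apply_eq.mpr hF.symm
            exact this.symm
        · rintro (h | h)
          · exact Or.inl h.symm
          · right
            subst h
            exact ((Equiv.ofBijective F hbij).apply_symm_apply v).symm
      have hne : v ≠ (Equiv.ofBijective F hbij).symm v := by
        intro h
        have : F v = v := by
          conv_lhs => rw [h]
          exact (Equiv.ofBijective F hbij).apply_symm_apply v
        exact (G.ne_of_adj (hadj v)).symm (by rw [this])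
      have hcard : (univ.filter fun u : V => v ∈ s(u, F u)).card = 2 := by
        rw [h3, card_insert_of_notMem (by simpa using hne), card_singleton]
      calc ∑ e ∈ univ.filter (fun e : Sym2 V => v ∈ e),
            ((univ.filter fun u => s(u, F u) = e).card : ℝ)
          = ((univ.filter fun u : V => v ∈ s(u, F u)).card : ℝ) := by
            rw [h1, Nat.cast_sum]
            exact Finset.sum_congr rfl (fun e he => by rw [h2 e he])
        _ = 2 := by rw [hcard]; norm_num
    rw [key]; norm_num


def mvs (M : Finset (Sym2 V)) : Finset V := M.biUnion evs

lemma mem_mvs {M : Finset (Sym2 V)} {v : V} : v ∈ mvs M ↔ ∃ e ∈ M, v ∈ e := by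
  simp [mvs, evs]

lemma card_mvs_le (M : Finset (Sym2 V)) : (mvs M).card ≤ 2 * M.card := by
  refine (Finset.card_biUnion_le).trans ?_
  calc ∑ e ∈ M, (evs e).card ≤ ∑ _e ∈ M, 2 := Finset.sum_le_sum (fun e _ => card_evs_le e)
    _ = 2 * M.card := by rw [Finset.sum_const, smul_eq_mul, Nat.mul_comm]

lemma exists_not_mem_of_card_lt {α : Type*} [DecidableEq α] {s t : Finset α}
    (h : s.card < t.card) : ∃ x ∈ t, x ∉ s := by
  by_contra hc
  push_neg at hc
  exact absurd (Finset.card_le_card fun x hx => hc x hx) (not_le.mpr h)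

lemma exists_kmatching (G : SimpleGraph V) [DecidableRel G.Adj] [Nonempty V] (d : ℕ)
    (hmin : ∀ v, d ≤ G.degree v) :
    ∀ j : ℕ, 2 * j ≤ d + 1 → ∃ M, IsMatching G M ∧ M.card = j := by
  intro j
  induction j with
  | zero => exact fun _ => ⟨∅, ⟨by simp, by simp⟩, rfl⟩
  | succ j ih =>
    intro hj
    obtain ⟨M, hM, hcard⟩ := ih (by omega)
    have hdn : d < Fintype.card V := by
      obtain ⟨v0⟩ := ‹Nonempty V›
      exact lt_of_le_of_lt (hmin v0) ((G.degree_lt_card_verts v0))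
    have hlt : (mvs M).card < Fintype.card V := by
      have := card_mvs_le M
      omega
    obtain ⟨v, -, hv⟩ := exists_not_mem_of_card_lt
      (show (mvs M).card < univ.card by simpa using hlt)
    have hlt2 : (mvs M).card < (G.neighborFinset v).card := by
      have := card_mvs_le M
      rw [G.card_neighborFinset_eq_degree]
      have := hmin v
      omega
    obtain ⟨w, hw, hwm⟩ := exists_not_mem_of_card_lt hlt2
    rw [SimpleGraph.mem_neighborFinset] at hw
    have hnew : s(v, w) ∉ M := fun h => hv (mem_mvs.mpr ⟨_, h, Sym2.mem_mk_left _ _⟩)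
    refine ⟨insert s(v, w) M, ⟨?_, ?_⟩, ?_⟩
    · intro e he
      rcases Finset.mem_insert.mp he with h | h
      · exact h ▸ G.mem_edgeSet.mpr hw
      · exact hM.1 h
    · intro e he f hf hef u hue huf
      rcases Finset.mem_insert.mp he with h | h <;> rcases Finset.mem_insert.mp hf with h' | h'
      · exact hef (h.trans h'.symm)
      · subst h
        rcases Sym2.mem_iff.mp hue with rfl | rfl
        · exact hv (mem_mvs.mpr ⟨_, h', huf⟩)
        · exact hwm (mem_mvs.mpr ⟨_, h', huf⟩)
      · subst h'
        rcases Sym2.mem_iff.mp huf with rfl | rfl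
        · exact hv (mem_mvs.mpr ⟨_, h, hue⟩)
        · exact hwm (mem_mvs.mpr ⟨_, h, hue⟩)
      · exact hM.2 e h f h' hef u hue huf
    · rw [Finset.card_insert_of_notMem hnew, hcard]


lemma card_mvs_eq (G : SimpleGraph V) (M : Finset (Sym2 V)) (hM : IsMatching G M) :
    (mvs M).card = 2 * M.card := by
  have hdisj : ∀ e ∈ M, ∀ f ∈ M, e ≠ f → Disjoint (evs e) (evs f) := by
    intro e he f hf hef
    rw [Finset.disjoint_left]
    intro v hv hvf
    simp only [evs, Finset.mem_filter, Finset.mem_univ, true_and] at hv hvf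
    exact hM.2 e he f hf hef v hv hvf
  have hcard : ∀ e ∈ M, (evs e).card = 2 := by
    intro e he
    have hedge : e ∈ G.edgeSet := hM.1 he
    induction e using Sym2.inductionOn with
    | hf x y =>
      have : G.Adj x y := (SimpleGraph.mem_edgeSet G).mp hedge
      rw [evs_pair, Finset.card_insert_of_notMem (by simpa using this.ne), Finset.card_singleton]
  rw [mvs, Finset.card_biUnion hdisj, Finset.sum_congr rfl hcard, Finset.sum_const,
    smul_eq_mul, Nat.mul_comm]

lemma weight_eq_one (F : V → V) (a b : V) (hab : a ≠ b) (ha : F a = b) (hb : F b = a) :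
    ((univ.filter fun u => s(u, F u) = s(a, b)).card : ℝ) / 2 = 1 := by
  have hset : (univ.filter fun u => s(u, F u) = s(a, b)) = {a, b} := by
    ext u
    simp only [mem_filter, mem_univ, true_and, mem_insert, mem_singleton]
    constructor
    · intro h
      have hu : u ∈ s(a, b) := h ▸ Sym2.mem_mk_left u (F u)
      rwa [Sym2.mem_iff] at hu
    · rintro (rfl | rfl)
      · rw [ha]
      · rw [hb]; exact Sym2.eq_swap
  rw [hset, card_insert_of_notMem (by simpa using hab), card_singleton]
  norm_num

def isoSet (G : SimpleGraph V) [DecidableRel G.Adj] (S : Finset V) : Finset V :=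
  univ.filter (fun v => v ∉ S ∧ ∀ w, G.Adj v w → w ∈ S)

lemma mem_isoSet {G : SimpleGraph V} [DecidableRel G.Adj] {S : Finset V} {v : V} :
    v ∈ isoSet G S ↔ (v ∉ S ∧ ∀ w, G.Adj v w → w ∈ S) := by
  simp [isoSet]

def TutteP (k : ℕ) (G : SimpleGraph V) [DecidableRel G.Adj] : Prop :=
  ∀ S : Finset V, (∃ M, IsMatching G M ∧ M.card = k ∧ ∀ e ∈ M, ∀ v ∈ e, v ∈ S) →
    (isoSet G S).card + 2 * k ≤ S.card

lemma case1 (G : SimpleGraph V) [DecidableRel G.Adj] (k : ℕ) (hP : TutteP k G)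
    (M : Finset (Sym2 V)) (hM : IsMatching G M) (hMc : M.card = k) :
    ∃ h, IsFPM G h ∧ ∀ e ∈ M, h e = 1 := by
  classical
  set T : Finset V := mvs M with hT
  -- Hall condition
  have hall : ∀ A : Finset {v : V // v ∉ T},
      A.card ≤ (A.biUnion fun a => G.neighborFinset a.1 \ T).card := by
    intro A
    set A' : Finset V := A.image Subtype.val with hA'
    have hA'card : A'.card = A.card := Finset.card_image_of_injective _ Subtype.val_injective
    have hA'T : ∀ a ∈ A', a ∉ T := by
      intro a ha
      obtain ⟨x, _, rfl⟩ := Finset.mem_image.mp ha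
      exact x.2
    have hbU : (A.biUnion fun a => G.neighborFinset a.1 \ T)
        = A'.biUnion fun a => G.neighborFinset a \ T := by
      ext v
      simp only [hA', Finset.mem_biUnion, Finset.mem_image]
      constructor
      · rintro ⟨a, ha, hv⟩; exact ⟨a.1, ⟨a, ha, rfl⟩, hv⟩
      · rintro ⟨b, ⟨a, ha, rfl⟩, hv⟩; exact ⟨a, ha, hv⟩
    set NT : Finset V → Finset V := fun X => X.biUnion fun a => G.neighborFinset a \ T with hNT
    set B : Finset V := A'.filter (fun a => ∃ b ∈ A', G.Adj a b) with hB
    set A'' : Finset V := A' \ B with hA''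
    have hA''indep : ∀ a ∈ A'', ∀ b ∈ A', ¬ G.Adj a b := by
      intro a ha b hb hadj
      rw [hA'', Finset.mem_sdiff] at ha
      exact ha.2 (Finset.mem_filter.mpr ⟨ha.1, b, hb, hadj⟩)
    -- apply TutteP to S := T ∪ NT A''
    have key : A''.card ≤ (NT A'').card := by
      set S : Finset V := T ∪ NT A'' with hS
      have hMS : ∃ M', IsMatching G M' ∧ M'.card = k ∧ ∀ e ∈ M', ∀ v ∈ e, v ∈ S := by
        refine ⟨M, hM, hMc, fun e he v hv => ?_⟩
        exact Finset.mem_union_left _ (mem_mvs.mpr ⟨e, he, hv⟩)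
      have hsub : A'' ⊆ isoSet G S := by
        intro a ha
        have haA' : a ∈ A' := (Finset.mem_sdiff.mp ha).1
        refine mem_isoSet.mpr ⟨?_, ?_⟩
        · intro haS
          rcases Finset.mem_union.mp haS with h | h
          · exact hA'T a haA' h
          · obtain ⟨b, hb, hab⟩ := Finset.mem_biUnion.mp h
            rw [Finset.mem_sdiff, SimpleGraph.mem_neighborFinset] at hab
            exact hA''indep b hb a haA' hab.1
            -- b ∈ A'', Adj b a, a ∈ A'
        · intro w hw
          by_cases hwT : w ∈ T
          · exact Finset.mem_union_left _ hwT
          · refine Finset.mem_union_right _ (Finset.mem_biUnion.mpr ⟨a, ha, ?_⟩)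
            rw [Finset.mem_sdiff, SimpleGraph.mem_neighborFinset]
            exact ⟨hw, hwT⟩
      have h1 := hP S hMS
      have h2 : A''.card ≤ (isoSet G S).card :=
        Finset.card_le_card hsub
      have h3 : S.card ≤ T.card + (NT A'').card := Finset.card_union_le _ _
      have h4 : T.card ≤ 2 * k := hMc ▸ card_mvs_le M
      omega
    have hBsub : B ⊆ NT A' := by
      intro b hb
      obtain ⟨hbA', a, ha, hba⟩ := Finset.mem_filter.mp hb
      refine Finset.mem_biUnion.mpr ⟨a, ha, ?_⟩
      rw [Finset.mem_sdiff, SimpleGraph.mem_neighborFinset]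
      exact ⟨hba.symm, hA'T b hbA'⟩
    have hNTsub : NT A'' ⊆ NT A' \ B := by
      intro v hv
      obtain ⟨a, ha, hva⟩ := Finset.mem_biUnion.mp hv
      rw [Finset.mem_sdiff, SimpleGraph.mem_neighborFinset] at hva
      refine Finset.mem_sdiff.mpr ⟨Finset.mem_biUnion.mpr ⟨a, (Finset.mem_sdiff.mp ha).1, by
        rw [Finset.mem_sdiff, SimpleGraph.mem_neighborFinset]; exact hva⟩, ?_⟩
      intro hvB
      exact hA''indep a ha v (Finset.mem_filter.mp hvB).1 hva.1
    have hfinal : A'.card ≤ (NT A').card := by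
      have hd : A''.card + B.card = A'.card := by
        rw [hA'']
        have : B ⊆ A' := Finset.filter_subset _ _
        rw [Finset.card_sdiff_of_subset this]
        have := Finset.card_le_card this
        omega
      have h5 : (NT A'').card + B.card ≤ (NT A').card := by
        have hdisj : Disjoint (NT A'') B := by
          rw [Finset.disjoint_left]
          intro v hv hvB
          exact (Finset.mem_sdiff.mp (hNTsub hv)).2 hvB
        have : NT A'' ∪ B ⊆ NT A' := Finset.union_subset
          ((hNTsub).trans (Finset.sdiff_subset)) hBsub
        calc (NT A'').card + B.card = (NT A'' ∪ B).card := (Finset.card_union_of_disjoint hdisj).symm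
          _ ≤ (NT A').card := Finset.card_le_card this
      omega
    rw [hbU, ← hA'card]
    exact hfinal.trans_eq rfl
  obtain ⟨f, hfinj, hfmem⟩ := (Finset.all_card_le_biUnion_card_iff_exists_injective _).mp hall
  -- partner function on T
  have hpartner : ∀ v ∈ T, ∃ e ∈ M, v ∈ e := fun v hv => mem_mvs.mp hv
  set F : V → V := fun v => if h : v ∈ T then Sym2.Mem.other' ((hpartner v h).choose_spec.2)
    else f ⟨v, h⟩ with hF
  have hFT : ∀ v (h : v ∈ T), s(v, F v) ∈ M ∧ F v ∈ T := by
    intro v h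
    have he := (hpartner v h).choose_spec.1
    have hv := (hpartner v h).choose_spec.2
    have hFv : F v = Sym2.Mem.other' hv := by rw [hF]; simp [h]
    have hspec : s(v, F v) = (hpartner v h).choose := by
      rw [hFv]; exact Sym2.other_spec' hv
    refine ⟨by rw [hspec]; exact he, ?_⟩
    exact mem_mvs.mpr ⟨_, he, by rw [← hspec]; exact Sym2.mem_mk_right _ _⟩
  have hFnT : ∀ v (h : v ∉ T), F v ∈ G.neighborFinset v \ T := by
    intro v h
    have : F v = f ⟨v, h⟩ := by rw [hF]; simp [h]
    rw [this]; exact hfmem ⟨v, h⟩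
  have hadj : ∀ v, G.Adj v (F v) := by
    intro v
    by_cases h : v ∈ T
    · exact G.mem_edgeSet.mp (hM.1 (hFT v h).1)
    · have := hFnT v h
      rw [Finset.mem_sdiff, SimpleGraph.mem_neighborFinset] at this
      exact this.1
  -- uniqueness of matching edge through a vertex
  have huniq : ∀ e ∈ M, ∀ e' ∈ M, ∀ v, v ∈ e → v ∈ e' → e = e' := by
    intro e he e' he' v hv hv'
    by_contra hne
    exact hM.2 e he e' he' hne v hv hv'
  have hinj : Function.Injective F := by
    intro u v huv
    by_cases hu : u ∈ T <;> by_cases hv : v ∈ T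
    · have h1 := (hFT u hu).1
      have h2 := (hFT v hv).1
      rw [huv] at h1
      have := huniq _ h1 _ h2 (F v) (Sym2.mem_mk_right _ _) (Sym2.mem_mk_right _ _)
      have : s(u, F v) = s(v, F v) := this
      exact Sym2.congr_left.mp this
    · have hnt := (Finset.mem_sdiff.mp (hFnT v hv)).2
      rw [← huv] at hnt
      exact absurd ((hFT u hu).2) hnt
    · have hnt := (Finset.mem_sdiff.mp (hFnT u hu)).2
      rw [huv] at hnt
      exact absurd ((hFT v hv).2) hnt
    · have h1 : F u = f ⟨u, hu⟩ := by rw [hF]; simp [hu]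
      have h2 : F v = f ⟨v, hv⟩ := by rw [hF]; simp [hv]
      have := hfinj (h1 ▸ h2 ▸ huv : f ⟨u, hu⟩ = f ⟨v, hv⟩)
      exact congrArg Subtype.val this
  refine ⟨_, fpm_of_perm G F hinj hadj, ?_⟩
  intro e he
  induction e using Sym2.inductionOn with
  | hf a b =>
    have haT : a ∈ T := mem_mvs.mpr ⟨_, he, Sym2.mem_mk_left _ _⟩
    have hbT : b ∈ T := mem_mvs.mpr ⟨_, he, Sym2.mem_mk_right _ _⟩
    have hab : a ≠ b := by
      intro h
      have : G.Adj a b := G.mem_edgeSet.mp (hM.1 he)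
      exact this.ne h
    have hFa : F a = b := by
      have h1 := (hFT a haT).1
      have := huniq _ h1 _ he a (Sym2.mem_mk_left _ _) (Sym2.mem_mk_left _ _)
      exact Sym2.congr_right.mp this
    have hFb : F b = a := by
      have h1 := (hFT b hbT).1
      have := huniq _ h1 _ he b (Sym2.mem_mk_left _ _) (Sym2.mem_mk_right _ _)
      have h2 : s(b, F b) = s(a, b) := this
      rw [Sym2.eq_swap (a := a)] at h2
      exact Sym2.congr_right.mp h2
    exact weight_eq_one F a b hab hFa hFb


end myhelpers

lemma arith1 (k d n s i : ℤ) (hk : 1 ≤ k) (hd : 2*k+1 ≤ d) (hn : 6*d ≤ n)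
    (hs : d ≤ s) (hi : s - 2*k + 1 ≤ i) (hsi : s + i ≤ n) :
    (n-i)*(n-i-1) + 2*i*s ≤ (n-d+2*k-1)*(n-d+2*k-2) + 2*(d-2*k+1)*d ∧
    ((d < s ∨ d - 2*k + 1 < i) →
      (n-i)*(n-i-1) + 2*i*s < (n-d+2*k-1)*(n-d+2*k-2) + 2*(d-2*k+1)*d) := by
  set j : ℤ := s - 2*k + 1 with hj
  set t : ℤ := i - j with ht
  have ht0 : 0 ≤ t := by omega
  have htn : t ≤ n - s - j := by omega
  have hfac : 0 ≤ t * (2*(n-s-j) - t - 1) := by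
    rcases eq_or_lt_of_le ht0 with h0 | h1
    · rw [← h0]; simp
    · exact mul_nonneg ht0 (by omega)
  have step1 : (n-i)*(n-i-1) + 2*i*s ≤ (n-j)*(n-j-1) + 2*j*s := by nlinarith [hfac]
  have step2 : (n-j)*(n-j-1) + 2*j*s ≤ (n-d+2*k-1)*(n-d+2*k-2) + 2*(d-2*k+1)*d := by
    nlinarith [mul_nonneg (by omega : (0:ℤ) ≤ s - d) (by omega : (0:ℤ) ≤ 2*n+8*k-5-3*d-3*s)]
  refine ⟨step1.trans step2, ?_⟩
  have hstrict2 : d < s →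
      (n-j)*(n-j-1) + 2*j*s < (n-d+2*k-1)*(n-d+2*k-2) + 2*(d-2*k+1)*d := by
    intro h
    nlinarith [mul_pos (by omega : (0:ℤ) < s - d) (by omega : (0:ℤ) < 2*n+8*k-5-3*d-3*s)]
  rintro (h | h)
  · exact lt_of_le_of_lt step1 (hstrict2 h)
  · by_cases hsd : d < s
    · exact lt_of_le_of_lt step1 (hstrict2 hsd)
    · have hsd' : s = d := by omega
      have hfac' : 0 < t * (2*(n-s-j) - t - 1) := mul_pos (by omega) (by omega)
      nlinarith [hfac']

lemma two_mul_choose_two (m : ℕ) : 2 * m.choose 2 = m * (m - 1) := by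
  induction m with
  | zero => simp
  | succ m' ih =>
    rw [Nat.choose_succ_succ, Nat.mul_add, ih, Nat.choose_one_right]
    rcases m' with _ | m''
    · simp
    · simp only [Nat.succ_sub_one]
      ring

lemma choose2_cast (m : ℕ) (hm : 1 ≤ m) :
    2 * ((m.choose 2 : ℕ) : ℤ) = (m : ℤ) * ((m : ℤ) - 1) := by
  have h := two_mul_choose_two m
  have h1 : ((m - 1 : ℕ) : ℤ) = (m : ℤ) - 1 := by omega
  calc 2 * ((m.choose 2 : ℕ) : ℤ) = ((2 * m.choose 2 : ℕ) : ℤ) := by push_cast; ring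
    _ = ((m * (m - 1) : ℕ) : ℤ) := by rw [h]
    _ = (m : ℤ) * ((m - 1 : ℕ) : ℤ) := by push_cast; ring
    _ = (m : ℤ) * ((m : ℤ) - 1) := by rw [h1]


section mycount
variable {V : Type*} [Fintype V] [DecidableEq V]

lemma count_le (G : SimpleGraph V) [DecidableRel G.Adj] (S I : Finset V)
    (hdisj : ∀ a ∈ I, a ∉ S)
    (hindep : ∀ a ∈ I, ∀ b ∈ I, ¬ G.Adj a b)
    (hIS : ∀ a ∈ I, ∀ w, G.Adj a w → w ∈ S) :
    G.edgeFinset.card ≤ ((univ \ I).card).choose 2 + I.card * S.card ∧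
    (G.edgeFinset.card = ((univ \ I).card).choose 2 + I.card * S.card →
      ∀ u v : V, G.Adj u v ↔ (u ≠ v ∧ ((u ∉ I ∧ v ∉ I) ∨ (u ∈ I ∧ v ∈ S) ∨ (u ∈ S ∧ v ∈ I)))) := by
  classical
  set C : Finset V := univ \ I with hC
  set E1 : Finset (Sym2 V) := G.edgeFinset.filter (fun e => ∀ v ∈ e, v ∈ C) with hE1
  set E2 : Finset (Sym2 V) := G.edgeFinset \ E1 with hE2
  set P1 : Finset (Sym2 V) := C.offDiag.image Sym2.mk.uncurry with hP1
  set P2 : Finset (Sym2 V) := (I ×ˢ S).image Sym2.mk.uncurry with hP2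
  have hsplit : G.edgeFinset.card = E1.card + E2.card := by
    have hsub : E1 ⊆ G.edgeFinset := by rw [hE1]; exact Finset.filter_subset _ _
    rw [hE2, Finset.card_sdiff_of_subset hsub]
    have := Finset.card_le_card hsub
    omega
  have hE1P1 : E1 ⊆ P1 := by
    intro e he
    rw [hE1, Finset.mem_filter] at he
    obtain ⟨heE, hev⟩ := he
    induction e using Sym2.inductionOn with
    | hf x y =>
      have hadj : G.Adj x y := by rwa [SimpleGraph.mem_edgeFinset, SimpleGraph.mem_edgeSet] at heE
      refine Finset.mem_image.mpr ⟨(x, y), ?_, rfl⟩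
      rw [Finset.mem_offDiag]
      exact ⟨hev x (Sym2.mem_mk_left _ _), hev y (Sym2.mem_mk_right _ _), hadj.ne⟩
  have hE2P2 : E2 ⊆ P2 := by
    intro e he
    rw [hE2, Finset.mem_sdiff] at he
    obtain ⟨heE, hne1⟩ := he
    induction e using Sym2.inductionOn with
    | hf x y =>
      have hadj : G.Adj x y := by rwa [SimpleGraph.mem_edgeFinset, SimpleGraph.mem_edgeSet] at heE
      have : ¬ (∀ v ∈ s(x, y), v ∈ C) := fun h => hne1 (Finset.mem_filter.mpr ⟨heE, h⟩)
      have hxy : x ∈ I ∨ y ∈ I := by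
        by_contra hcon
        push_neg at hcon
        exact this (fun v hv => by
          rcases Sym2.mem_iff.mp hv with rfl | rfl
          · exact Finset.mem_sdiff.mpr ⟨Finset.mem_univ _, hcon.1⟩
          · exact Finset.mem_sdiff.mpr ⟨Finset.mem_univ _, hcon.2⟩)
      rcases hxy with hx | hy
      · exact Finset.mem_image.mpr ⟨(x, y), Finset.mem_product.mpr ⟨hx, hIS x hx y hadj⟩, rfl⟩
      · refine Finset.mem_image.mpr ⟨(y, x), Finset.mem_product.mpr ⟨hy, hIS y hy x hadj.symm⟩, ?_⟩
        exact Sym2.eq_swap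
  have hP1card : P1.card = (C.card).choose 2 := Sym2.card_image_offDiag C
  have hP2card : P2.card = I.card * S.card := by
    rw [hP2, Finset.card_image_of_injOn, Finset.card_product]
    intro p hp q hq hpq
    rw [Finset.mem_coe, Finset.mem_product] at hp hq
    rcases Sym2.mk_eq_mk_iff.mp hpq with h | h
    · exact h
    · -- p = q.swap : p.1 = q.2 ∈ S and p.1 ∈ I, contradiction
      exfalso
      have h1 : p.1 = q.2 := by rw [h]; rfl
      exact hdisj p.1 hp.1 (h1 ▸ hq.2)
  have hle : G.edgeFinset.card ≤ C.card.choose 2 + I.card * S.card := by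
    rw [hsplit, ← hP1card, ← hP2card]
    exact Nat.add_le_add (Finset.card_le_card hE1P1) (Finset.card_le_card hE2P2)
  refine ⟨hle, ?_⟩
  intro heq u v
  have hE1eq : E1 = P1 ∧ E2 = P2 := by
    have h1 := Finset.card_le_card hE1P1
    have h2 := Finset.card_le_card hE2P2
    have h3 : E1.card = P1.card ∧ E2.card = P2.card := by
      rw [hsplit, ← hP1card, ← hP2card] at heq
      omega
    exact ⟨Finset.eq_of_subset_of_card_le hE1P1 (le_of_eq h3.1.symm),
      Finset.eq_of_subset_of_card_le hE2P2 (le_of_eq h3.2.symm)⟩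
  constructor
  · intro hadj
    refine ⟨hadj.ne, ?_⟩
    have hmem : s(u, v) ∈ G.edgeFinset := by
      rw [SimpleGraph.mem_edgeFinset, SimpleGraph.mem_edgeSet]; exact hadj
    by_cases h1 : s(u, v) ∈ E1
    · left
      rw [hE1, Finset.mem_filter] at h1
      have hu := h1.2 u (Sym2.mem_mk_left _ _)
      have hv := h1.2 v (Sym2.mem_mk_right _ _)
      exact ⟨(Finset.mem_sdiff.mp hu).2, (Finset.mem_sdiff.mp hv).2⟩
    · have h2 : s(u, v) ∈ E2 := by rw [hE2, Finset.mem_sdiff]; exact ⟨hmem, h1⟩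
      rw [hE1eq.2, hP2] at h2
      obtain ⟨⟨a, x⟩, hax, heq2⟩ := Finset.mem_image.mp h2
      rw [Finset.mem_product] at hax
      rcases Sym2.mk_eq_mk_iff.mp (show s((a, x).1, (a, x).2) = s((u, v).1, (u, v).2) from heq2) with h | h
      · rw [Prod.ext_iff] at h
        simp only at h
        right; left; exact ⟨h.1 ▸ hax.1, h.2 ▸ hax.2⟩
      · rw [Prod.ext_iff] at h
        simp only [Prod.fst_swap, Prod.snd_swap] at h
        right; right; exact ⟨h.2 ▸ hax.2, h.1 ▸ hax.1⟩
  · rintro ⟨hne, (⟨hu, hv⟩ | ⟨hu, hv⟩ | ⟨hu, hv⟩)⟩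
    · have : s(u, v) ∈ P1 := by
        refine Finset.mem_image.mpr ⟨(u, v), ?_, rfl⟩
        rw [Finset.mem_offDiag]
        exact ⟨Finset.mem_sdiff.mpr ⟨Finset.mem_univ _, hu⟩,
          Finset.mem_sdiff.mpr ⟨Finset.mem_univ _, hv⟩, hne⟩
      rw [← hE1eq.1, hE1, Finset.mem_filter, SimpleGraph.mem_edgeFinset, SimpleGraph.mem_edgeSet] at this
      exact this.1
    · have : s(u, v) ∈ P2 := Finset.mem_image.mpr ⟨(u, v), Finset.mem_product.mpr ⟨hu, hv⟩, rfl⟩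
      rw [← hE1eq.2, hE2, Finset.mem_sdiff, SimpleGraph.mem_edgeFinset, SimpleGraph.mem_edgeSet] at this
      exact this.1
    · have : s(v, u) ∈ P2 := Finset.mem_image.mpr ⟨(v, u), Finset.mem_product.mpr ⟨hv, hu⟩, rfl⟩
      rw [← hE1eq.2, hE2, Finset.mem_sdiff, SimpleGraph.mem_edgeFinset, SimpleGraph.mem_edgeSet] at this
      exact this.1.symm


end mycount

lemma card_filter_lt (n m : ℕ) (h : m ≤ n) :
    (univ.filter fun v : Fin n => (v : ℕ) < m).card = m := by
  apply Finset.card_eq_of_bijective (fun i hi => (⟨i, lt_of_lt_of_le hi h⟩ : Fin n))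
  · intro a ha
    rw [Finset.mem_filter] at ha
    exact ⟨a.1, ha.2, Fin.ext rfl⟩
  · intro i hi
    rw [Finset.mem_filter]
    exact ⟨Finset.mem_univ _, hi⟩
  · intro i j hi hj hij
    exact congrArg Fin.val hij

lemma jud_lb (n a b : ℕ) (hab : a + b ≤ n) :
    ((a + b).choose 2) + (n - (a + b)) * a ≤ (jud n a b).edgeFinset.card := by
  classical
  set Cj : Finset (Fin n) := univ.filter (fun v => (v : ℕ) < a + b) with hCj
  set Sj : Finset (Fin n) := univ.filter (fun v => (v : ℕ) < a) with hSj
  set Ij : Finset (Fin n) := univ \ Cj with hIj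
  have hCc : Cj.card = a + b := card_filter_lt n (a + b) hab
  have hSc : Sj.card = a := card_filter_lt n a (le_trans (Nat.le_add_right _ _) hab)
  have hIc : Ij.card = n - (a + b) := by
    rw [hIj, Finset.card_sdiff_of_subset (Finset.subset_univ _), Finset.card_univ, Fintype.card_fin, hCc]
  set Q1 : Finset (Sym2 (Fin n)) := Cj.offDiag.image Sym2.mk.uncurry with hQ1
  set Q2 : Finset (Sym2 (Fin n)) := (Ij ×ˢ Sj).image Sym2.mk.uncurry with hQ2
  have hQ1sub : Q1 ⊆ (jud n a b).edgeFinset := by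
    intro e he
    obtain ⟨⟨x, y⟩, hxy, rfl⟩ := Finset.mem_image.mp he
    rw [Finset.mem_offDiag] at hxy
    rw [SimpleGraph.mem_edgeFinset, Function.uncurry_apply_pair, SimpleGraph.mem_edgeSet]
    refine ⟨hxy.2.2, Or.inr (Or.inr ⟨?_, ?_⟩)⟩
    · exact (Finset.mem_filter.mp hxy.1).2
    · exact (Finset.mem_filter.mp hxy.2.1).2
  have hQ2sub : Q2 ⊆ (jud n a b).edgeFinset := by
    intro e he
    obtain ⟨⟨x, y⟩, hxy, rfl⟩ := Finset.mem_image.mp he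
    rw [Finset.mem_product] at hxy
    have hx : ¬ (x : ℕ) < a + b := by
      have := Finset.mem_sdiff.mp hxy.1
      simpa [hCj] using this.2
    have hy : (y : ℕ) < a := (Finset.mem_filter.mp hxy.2).2
    rw [SimpleGraph.mem_edgeFinset, Function.uncurry_apply_pair, SimpleGraph.mem_edgeSet]
    refine ⟨?_, Or.inr (Or.inl hy)⟩
    intro h
    rw [h] at hx
    omega
  have hdisjQ : Disjoint Q1 Q2 := by
    rw [Finset.disjoint_left]
    intro e he1 he2
    obtain ⟨⟨x, y⟩, hxy, hxyeq⟩ := Finset.mem_image.mp he1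
    obtain ⟨⟨z, w⟩, hzw, hzweq⟩ := Finset.mem_image.mp he2
    rw [Finset.mem_offDiag] at hxy
    rw [Finset.mem_product] at hzw
    have hz : ¬ (z : ℕ) < a + b := by
      have := Finset.mem_sdiff.mp hzw.1
      simpa [hCj] using this.2
    have : z ∈ s(x, y) := by rw [← Function.uncurry_apply_pair Sym2.mk x y, hxyeq, ← hzweq]; exact Sym2.mem_mk_left _ _
    rcases Sym2.mem_iff.mp this with rfl | rfl
    · exact hz (Finset.mem_filter.mp hxy.1).2
    · exact hz (Finset.mem_filter.mp hxy.2.1).2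
  have hQ1c : Q1.card = (a + b).choose 2 := by rw [hQ1, Sym2.card_image_offDiag, hCc]
  have hQ2c : Q2.card = (n - (a + b)) * a := by
    rw [hQ2, Finset.card_image_of_injOn, Finset.card_product, hIc, hSc]
    intro p hp q hq hpq
    rw [Finset.mem_coe, Finset.mem_product] at hp hq
    rcases Sym2.mk_eq_mk_iff.mp hpq with h | h
    · exact h
    · exfalso
      have h1 : p.1 = q.2 := by rw [h]; rfl
      have hp1 : ¬ (p.1 : ℕ) < a + b := by
        have := Finset.mem_sdiff.mp hp.1
        simpa [hCj] using this.2
      have hq2 : (q.2 : ℕ) < a := (Finset.mem_filter.mp hq.2).2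
      rw [h1] at hp1
      omega
  calc (a + b).choose 2 + (n - (a + b)) * a = (Q1 ∪ Q2).card := by
        rw [Finset.card_union_of_disjoint hdisjQ, hQ1c, hQ2c]
    _ ≤ (jud n a b).edgeFinset.card :=
        Finset.card_le_card (Finset.union_subset hQ1sub hQ2sub)

lemma build_iso (n a b : ℕ) (hab : a + b ≤ n) (G : SimpleGraph (Fin n)) [DecidableRel G.Adj]
    (S I : Finset (Fin n)) (hSc : S.card = a) (hIc : I.card = n - (a + b))
    (hdisj : ∀ v ∈ I, v ∉ S)
    (hchar : ∀ u v, G.Adj u v ↔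
      (u ≠ v ∧ ((u ∉ I ∧ v ∉ I) ∨ (u ∈ I ∧ v ∈ S) ∨ (u ∈ S ∧ v ∈ I)))) :
    Nonempty (G ≃g jud n a b) := by
  classical
  set Sj : Finset (Fin n) := univ.filter (fun v => (v : ℕ) < a) with hSj
  set Cj : Finset (Fin n) := univ.filter (fun v => (v : ℕ) < a + b) with hCj
  set T2j : Finset (Fin n) := Cj \ Sj with hT2j
  set Ij : Finset (Fin n) := univ \ Cj with hIj
  set T2 : Finset (Fin n) := (univ \ I) \ S with hT2
  have hSsubC : Sj ⊆ Cj := by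
    intro v hv
    rw [hCj, Finset.mem_filter]
    rw [hSj, Finset.mem_filter] at hv
    exact ⟨Finset.mem_univ _, by omega⟩
  have hCc : Cj.card = a + b := card_filter_lt n (a + b) hab
  have hSjc : Sj.card = a := card_filter_lt n a (le_trans (Nat.le_add_right _ _) hab)
  have hT2jc : T2j.card = b := by
    rw [hT2j, Finset.card_sdiff_of_subset hSsubC, hCc, hSjc]; omega
  have hIjc : Ij.card = n - (a + b) := by
    rw [hIj, Finset.card_sdiff_of_subset (Finset.subset_univ _), Finset.card_univ, Fintype.card_fin, hCc]
  have hT2c : T2.card = b := by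
    rw [hT2, Finset.card_sdiff_of_subset, Finset.card_sdiff_of_subset (Finset.subset_univ _), Finset.card_univ,
      Fintype.card_fin, hIc, hSc]
    · have hIn : I.card ≤ n := by
        have := Finset.card_le_univ I
        simpa using this
      omega
    · intro v hv
      rw [Finset.mem_sdiff]
      exact ⟨Finset.mem_univ _, fun hvI => hdisj v hvI hv⟩
  have e1 : {x // x ∈ S} ≃ {x // x ∈ Sj} := Finset.equivOfCardEq (by rw [hSc, hSjc])
  have e2 : {x // x ∈ T2} ≃ {x // x ∈ T2j} := Finset.equivOfCardEq (by rw [hT2c, hT2jc])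
  have e3 : {x // x ∈ I} ≃ {x // x ∈ Ij} := Finset.equivOfCardEq (by rw [hIc, hIjc])
  set F : Fin n → Fin n := fun v =>
    if h : v ∈ I then (e3 ⟨v, h⟩ : Fin n)
    else if h2 : v ∈ S then (e1 ⟨v, h2⟩ : Fin n)
    else (e2 ⟨v, by rw [hT2]; rw [Finset.mem_sdiff, Finset.mem_sdiff]; exact ⟨⟨Finset.mem_univ _, h⟩, h2⟩⟩ : Fin n)
    with hF
  have hmemI : ∀ v (h : v ∈ I), (F v) ∈ Ij := by
    intro v h
    rw [hF]; simp only [h, dif_pos]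
    exact (e3 ⟨v, h⟩).2
  have hmemS : ∀ v (h : v ∉ I) (h2 : v ∈ S), (F v) ∈ Sj := by
    intro v h h2
    rw [hF]; simp only [h, dif_neg, not_false_iff, h2, dif_pos]
    exact (e1 ⟨v, h2⟩).2
  have hmemT : ∀ v (h : v ∉ I) (h2 : v ∉ S), (F v) ∈ T2j := by
    intro v h h2
    rw [hF]; simp only [h, dif_neg, not_false_iff, h2]
    exact (e2 _).2
  have fS : ∀ v, ((F v : Fin n) : ℕ) < a ↔ v ∈ S := by
    intro v
    by_cases h : v ∈ I
    · have := hmemI v h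
      rw [hIj, Finset.mem_sdiff, hCj, Finset.mem_filter] at this
      simp only [Finset.mem_univ, true_and, not_lt] at this
      constructor
      · intro hlt; omega
      · intro hvS; exact absurd hvS (hdisj v h)
    · by_cases h2 : v ∈ S
      · have := hmemS v h h2
        rw [hSj, Finset.mem_filter] at this
        exact ⟨fun _ => h2, fun _ => this.2⟩
      · have := hmemT v h h2
        simp only [hT2j, Finset.mem_sdiff, hSj, hCj, Finset.mem_filter, Finset.mem_univ,
          true_and] at this
        exact ⟨fun hlt => absurd hlt this.2, fun hvS => absurd hvS h2⟩
  have fC : ∀ v, ((F v : Fin n) : ℕ) < a + b ↔ v ∉ I := by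
    intro v
    by_cases h : v ∈ I
    · have := hmemI v h
      rw [hIj, Finset.mem_sdiff, hCj, Finset.mem_filter] at this
      simp only [Finset.mem_univ, true_and, not_lt] at this
      exact ⟨fun hlt => by omega, fun hvI => absurd h hvI⟩
    · by_cases h2 : v ∈ S
      · have := hmemS v h h2
        rw [hSj, Finset.mem_filter] at this
        exact ⟨fun _ => h, fun _ => by omega⟩
      · have := hmemT v h h2
        simp only [hT2j, Finset.mem_sdiff, hSj, hCj, Finset.mem_filter, Finset.mem_univ,
          true_and] at this
        exact ⟨fun _ => h, fun _ => this.1⟩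
  have hinj : Function.Injective F := by
    intro u v huv
    by_cases hu : u ∈ I <;> by_cases hv : v ∈ I
    · have h1 := hmemI u hu
      have h2 := hmemI v hv
      have := e3.injective (Subtype.ext (show ((e3 ⟨u, hu⟩ : Fin n)) = (e3 ⟨v, hv⟩ : Fin n) by
        have hu' : F u = (e3 ⟨u, hu⟩ : Fin n) := by rw [hF]; simp [hu]
        have hv' : F v = (e3 ⟨v, hv⟩ : Fin n) := by rw [hF]; simp [hv]
        rw [← hu', ← hv', huv]))
      exact congrArg Subtype.val this
    · exfalso
      have := (fC v).mpr hv
      rw [← huv] at this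
      exact ((fC u).mp this) hu
    · exfalso
      have := (fC u).mpr hu
      rw [huv] at this
      exact ((fC v).mp this) hv
    · by_cases hu2 : u ∈ S <;> by_cases hv2 : v ∈ S
      · have := e1.injective (Subtype.ext (show ((e1 ⟨u, hu2⟩ : Fin n)) = (e1 ⟨v, hv2⟩ : Fin n) by
          have hu' : F u = (e1 ⟨u, hu2⟩ : Fin n) := by rw [hF]; simp [hu, hu2]
          have hv' : F v = (e1 ⟨v, hv2⟩ : Fin n) := by rw [hF]; simp [hv, hv2]
          rw [← hu', ← hv', huv]))
        exact congrArg Subtype.val this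
      · exfalso
        have := (fS u).mpr hu2
        rw [huv] at this
        exact hv2 ((fS v).mp this)
      · exfalso
        have := (fS v).mpr hv2
        rw [← huv] at this
        exact hu2 ((fS u).mp this)
      · have := e2.injective (Subtype.ext (show ((e2 ⟨u, _⟩ : Fin n)) = (e2 ⟨v, _⟩ : Fin n) by
          have hu' : F u = (e2 ⟨u, by rw [hT2]; rw [Finset.mem_sdiff, Finset.mem_sdiff]; exact ⟨⟨Finset.mem_univ _, hu⟩, hu2⟩⟩ : Fin n) := by
            rw [hF]; simp [hu, hu2]
          have hv' : F v = (e2 ⟨v, by rw [hT2]; rw [Finset.mem_sdiff, Finset.mem_sdiff]; exact ⟨⟨Finset.mem_univ _, hv⟩, hv2⟩⟩ : Fin n) := by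
            rw [hF]; simp [hv, hv2]
          rw [← hu', ← hv', huv]))
        exact congrArg Subtype.val this
  have hbij : Function.Bijective F := Finite.injective_iff_bijective.mp hinj
  refine ⟨⟨Equiv.ofBijective F hbij, ?_⟩⟩
  intro u v
  show (jud n a b).Adj (F u) (F v) ↔ G.Adj u v
  have hFne : F u ≠ F v ↔ u ≠ v := hinj.ne_iff
  rw [hchar u v]
  constructor
  · rintro ⟨hne, hcase⟩
    refine ⟨hFne.mp hne, ?_⟩
    rcases hcase with h | h | h
    · have huS := (fS u).mp h
      by_cases hvI : v ∈ I
      · right; right; exact ⟨huS, hvI⟩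
      · left; exact ⟨fun hI => hdisj u hI huS, hvI⟩
    · have hvS := (fS v).mp h
      by_cases huI : u ∈ I
      · right; left; exact ⟨huI, hvS⟩
      · left; exact ⟨huI, fun hI => hdisj v hI hvS⟩
    · left
      exact ⟨(fC u).mp h.1, (fC v).mp h.2⟩
  · rintro ⟨hne, hcase⟩
    refine ⟨hFne.mpr hne, ?_⟩
    rcases hcase with ⟨h1, h2⟩ | ⟨h1, h2⟩ | ⟨h1, h2⟩
    · right; right
      exact ⟨(fC u).mpr h1, (fC v).mpr h2⟩
    · right; left
      exact (fS v).mpr h2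
    · left
      exact (fS u).mpr h1

theorem stmt4 (k d n : ℕ) (hk : 1 ≤ k) (hd : 2 * k + 1 ≤ d) (hn : 6 * d ≤ n)
    (G : SimpleGraph (Fin n)) [DecidableRel G.Adj] (hc : G.Connected)
    (hmin : G.minDegree = d)
    (he : (jud n d (n - (2 * d - 2 * k) - 1)).edgeFinset.card ≤ G.edgeFinset.card) :
    FracExt k G ∨ Nonempty (G ≃g jud n d (n - (2 * d - 2 * k) - 1)) := by
  have hn0 : 0 < n := by omega
  haveI : Nonempty (Fin n) := ⟨⟨0, hn0⟩⟩
  have hdeg : ∀ v, d ≤ G.degree v := fun v => hmin ▸ G.minDegree_le_degree v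
  by_cases hP : TutteP k G
  · exact Or.inl ⟨exists_kmatching G d hdeg k (by omega),
      fun M hM hMc => case1 G k hP M hM hMc⟩
  · right
    rw [TutteP] at hP
    push_neg at hP
    obtain ⟨S, ⟨M, hM, hMc, hMS⟩, hlt⟩ := hP
    set I : Finset (Fin n) := isoSet G S with hI
    have hIdisj : ∀ a ∈ I, a ∉ S := fun a ha => (mem_isoSet.mp ha).1
    have hIS : ∀ a ∈ I, ∀ w, G.Adj a w → w ∈ S := fun a ha => (mem_isoSet.mp ha).2
    have hIndep : ∀ a ∈ I, ∀ b' ∈ I, ¬ G.Adj a b' :=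
      fun a ha b' hb' hab => hIdisj b' hb' (hIS a ha b' hab)
    clear_value I
    clear hI
    have hsub : mvs M ⊆ S := fun v hv => by
      obtain ⟨e, he', hve⟩ := mem_mvs.mp hv
      exact hMS e he' v hve
    have hs2k : 2 * k ≤ S.card := by
      have := Finset.card_le_card hsub
      rwa [card_mvs_eq G M hM, hMc] at this
    have hiLB : S.card + 1 ≤ I.card + 2 * k := hlt
    have hIne : I.Nonempty := Finset.card_pos.mp (by omega)
    obtain ⟨a0, ha0⟩ := hIne
    have hsd : d ≤ S.card := by
      have h1 : G.neighborFinset a0 ⊆ S := by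
        intro w hw
        rw [SimpleGraph.mem_neighborFinset] at hw
        exact hIS a0 ha0 w hw
      calc d ≤ G.degree a0 := hdeg a0
        _ = (G.neighborFinset a0).card := (G.card_neighborFinset_eq_degree a0).symm
        _ ≤ S.card := Finset.card_le_card h1
    have hdisjSI : Disjoint S I := Finset.disjoint_right.mpr (fun a ha => hIdisj a ha)
    have hsin : S.card + I.card ≤ n := by
      rw [← Finset.card_union_of_disjoint hdisjSI]
      have := Finset.card_le_univ (S ∪ I)
      simpa using this
    have hcount := count_le G S I hIdisj hIndep hIS
    have hCc : (univ \ I).card = n - I.card := by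
      rw [Finset.card_sdiff_of_subset (Finset.subset_univ _), Finset.card_univ, Fintype.card_fin]
    set b : ℕ := n - (2 * d - 2 * k) - 1 with hb
    have hdb : d + b ≤ n := by omega
    have hjb := jud_lb n d b hdb
    have hio : n - (d + b) = d - 2 * k + 1 := by omega
    have chain : (d + b).choose 2 + (d - 2 * k + 1) * d
        ≤ (n - I.card).choose 2 + I.card * S.card := by
      calc (d + b).choose 2 + (d - 2 * k + 1) * d
          = (d + b).choose 2 + (n - (d + b)) * d := by rw [hio]
        _ ≤ (jud n d b).edgeFinset.card := hjb
        _ ≤ G.edgeFinset.card := he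
        _ ≤ (univ \ I).card.choose 2 + I.card * S.card := hcount.1
        _ = (n - I.card).choose 2 + I.card * S.card := by rw [hCc]
    have hiLe : I.card ≤ n := by omega
    have harith := arith1 (k : ℤ) (d : ℤ) (n : ℤ) (S.card : ℤ) (I.card : ℤ)
      (by exact_mod_cast hk) (by exact_mod_cast hd) (by exact_mod_cast hn)
      (by exact_mod_cast hsd) (by omega) (by omega)
    -- cast chain to ℤ
    have hm1 : ((d + b : ℕ) : ℤ) = (n : ℤ) - d + 2 * k - 1 := by omega
    have hm2 : ((n - I.card : ℕ) : ℤ) = (n : ℤ) - I.card := by omega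
    have hc1 := choose2_cast (d + b) (by omega)
    have hc2 := choose2_cast (n - I.card) (by omega)
    rw [hm1] at hc1
    rw [hm2] at hc2
    have hio2 : ((d - 2 * k + 1 : ℕ) : ℤ) = (d : ℤ) - 2 * k + 1 := by omega
    have hchainZ : ((n : ℤ) - d + 2 * k - 1) * ((n : ℤ) - d + 2 * k - 2)
        + 2 * ((d : ℤ) - 2 * k + 1) * d
        ≤ ((n : ℤ) - I.card) * ((n : ℤ) - I.card - 1) + 2 * I.card * S.card := by
      have hcast : (((d + b).choose 2 : ℕ) : ℤ) + ((d - 2 * k + 1 : ℕ) : ℤ) * (d : ℤ)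
          ≤ (((n - I.card).choose 2 : ℕ) : ℤ) + (I.card : ℤ) * (S.card : ℤ) := by
        exact_mod_cast chain
      rw [hio2] at hcast
      linarith [hc1, hc2, hcast]
    have hEqZ : ((n : ℤ) - I.card) * ((n : ℤ) - I.card - 1) + 2 * I.card * S.card
        = ((n : ℤ) - d + 2 * k - 1) * ((n : ℤ) - d + 2 * k - 2)
          + 2 * ((d : ℤ) - 2 * k + 1) * d := le_antisymm harith.1 hchainZ
    have hsEq : S.card = d := by
      by_contra hne
      have hlt2 : (d : ℤ) < (S.card : ℤ) := by omega
      have := harith.2 (Or.inl hlt2)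
      linarith
    have hiEq : I.card = d - 2 * k + 1 := by
      by_contra hne
      have hlt2 : (d : ℤ) - 2 * k + 1 < (I.card : ℤ) := by omega
      have := harith.2 (Or.inr hlt2)
      linarith
    -- equality of the whole ℕ chain
    have hends : (d + b).choose 2 + (d - 2 * k + 1) * d
        = (n - I.card).choose 2 + I.card * S.card := by
      have h1 : n - I.card = d + b := by omega
      rw [h1, hiEq, hsEq]
    have hEqG : G.edgeFinset.card = (univ \ I).card.choose 2 + I.card * S.card := by
      have hlow : (d + b).choose 2 + (d - 2 * k + 1) * d ≤ G.edgeFinset.card := by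
        calc (d + b).choose 2 + (d - 2 * k + 1) * d
            = (d + b).choose 2 + (n - (d + b)) * d := by rw [hio]
          _ ≤ (jud n d b).edgeFinset.card := hjb
          _ ≤ G.edgeFinset.card := he
      have hhigh := hcount.1
      rw [hCc] at hhigh ⊢
      omega
    have hchar := hcount.2 (by rw [hCc] at hEqG ⊢; exact hEqG)
    have hIcard : I.card = n - (d + b) := by omega
    exact build_iso n d b hdb G S I hsEq hIcard hIdisj hchar
end

section
/- Let δ, s, n, k be positive integers with n ≥ max{2s - 2k + 1, 6.5δ} and s ≥ δ ≥ 2k + 1. Then q(K_s ∨ (K_{n-2s+2k-1} ∪ (s-2k+1)K_1)) ≤ q(K_δ ∨ (K_{n-2δ+2k-1} ∪ (δ-2k+1)K_1)), with equality if and only if s = δ. -/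
open Finset

section Spec

/-- Perron: nonneg symmetric matrix with positive eigenvector has specRadius = eigenvalue. -/
lemma specRadius_eq_of_pos_eigenvector {n : ℕ} (M : Matrix (Fin n) (Fin n) ℝ)
    (hsymm : ∀ u v, M u v = M v u) (hnn : ∀ u v, 0 ≤ M u v)
    (v : Fin n → ℝ) (ρ : ℝ) (hv : ∀ u, 0 < v u) (heig : M.mulVec v = ρ • v)
    (hn : 0 < n) : specRadius M = ρ := by
  have hvne : v ≠ 0 := by
    intro h
    have := hv ⟨0, hn⟩
    rw [h] at this
    simp at this
  apply IsGreatest.csSup_eq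
  constructor
  · exact ⟨v, hvne, heig⟩
  · rintro t ⟨x, hx, hxe⟩
    -- w = |x|
    set w : Fin n → ℝ := fun u => |x u| with hw
    have hkey : ∀ u, |t| * w u ≤ ∑ j, M u j * w j := by
      intro u
      have h1 : |t| * w u = |t * x u| := by rw [abs_mul]
      have h2 : t * x u = ∑ j, M u j * x j := by
        have := congrFun hxe u
        simp [Matrix.mulVec, dotProduct] at this
        rw [this]
      rw [h1, h2]
      calc |∑ j, M u j * x j| ≤ ∑ j, |M u j * x j| := Finset.abs_sum_le_sum_abs _ _
        _ = ∑ j, M u j * w j := by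
            apply Finset.sum_congr rfl
            intro j _
            rw [abs_mul, abs_of_nonneg (hnn u j)]
    have hsum : |t| * ∑ u, v u * w u ≤ ρ * ∑ u, v u * w u := by
      have step1 : ∑ u, v u * (|t| * w u) ≤ ∑ u, v u * (∑ j, M u j * w j) := by
        apply Finset.sum_le_sum
        intro u _
        exact mul_le_mul_of_nonneg_left (hkey u) (hv u).le
      have step2 : ∑ u, v u * (∑ j, M u j * w j) = ∑ j, (ρ * v j) * w j := by
        calc ∑ u, v u * (∑ j, M u j * w j) = ∑ u, ∑ j, v u * (M u j * w j) := by
              simp [Finset.mul_sum]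
          _ = ∑ j, ∑ u, v u * (M u j * w j) := Finset.sum_comm
          _ = ∑ j, (∑ u, M j u * v u) * w j := by
              apply Finset.sum_congr rfl
              intro j _
              rw [Finset.sum_mul]
              apply Finset.sum_congr rfl
              intro u _
              rw [hsymm u j]; ring
          _ = ∑ j, (ρ * v j) * w j := by
              apply Finset.sum_congr rfl
              intro j _
              have := congrFun heig j
              simp [Matrix.mulVec, dotProduct] at this
              rw [this]
      calc |t| * ∑ u, v u * w u = ∑ u, v u * (|t| * w u) := by
            rw [Finset.mul_sum]; apply Finset.sum_congr rfl; intro u _; ring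
        _ ≤ ∑ u, v u * (∑ j, M u j * w j) := step1
        _ = ∑ j, (ρ * v j) * w j := step2
        _ = ρ * ∑ u, v u * w u := by
            rw [Finset.mul_sum]; apply Finset.sum_congr rfl; intro u _; ring
    have hpos : 0 < ∑ u, v u * w u := by
      obtain ⟨u0, hu0⟩ : ∃ u, x u ≠ 0 := by
        by_contra h
        push_neg at h
        exact hx (funext h)
      have : 0 < v u0 * w u0 := mul_pos (hv u0) (abs_pos.mpr hu0)
      have hnonneg : ∀ u ∈ Finset.univ, 0 ≤ v u * w u := fun u _ =>
        mul_nonneg (hv u).le (abs_nonneg _)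
      calc 0 < v u0 * w u0 := this
        _ ≤ ∑ u, v u * w u := Finset.single_le_sum hnonneg (Finset.mem_univ u0)
    have h3 : |t| ≤ ρ := le_of_mul_le_mul_right (by
      calc |t| * ∑ u, v u * w u ≤ ρ * ∑ u, v u * w u := hsum
      ) hpos
    exact le_trans (le_abs_self t) h3

end Spec
section ClassSum

lemma sum_classes (n a ab : ℕ) (hab : a ≤ ab) (hn : ab ≤ n) (h1 h2 h3 : ℝ) :
    ∑ v : Fin n, (if (v : ℕ) < a then h1 else if (v : ℕ) < ab then h2 else h3)
      = a * h1 + (ab - a : ℕ) * h2 + (n - ab : ℕ) * h3 := by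
  rw [Fin.sum_univ_eq_sum_range (fun j => if j < a then h1 else if j < ab then h2 else h3)]
  rw [Finset.range_eq_Ico]
  rw [← Finset.sum_Ico_consecutive _ (Nat.zero_le ab) hn]
  rw [← Finset.sum_Ico_consecutive _ (Nat.zero_le a) hab]
  have e1 : ∑ j ∈ Finset.Ico 0 a, (if j < a then h1 else if j < ab then h2 else h3)
      = a * h1 := by
    rw [Finset.sum_congr rfl (fun j hj => by
      simp only [Finset.mem_Ico] at hj
      rw [if_pos hj.2])]
    simp [Nat.card_Ico]
  have e2 : ∑ j ∈ Finset.Ico a ab, (if j < a then h1 else if j < ab then h2 else h3)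
      = (ab - a : ℕ) * h2 := by
    rw [Finset.sum_congr rfl (fun j hj => by
      simp only [Finset.mem_Ico] at hj
      rw [if_neg (by omega), if_pos hj.2])]
    simp [Nat.card_Ico]
  have e3 : ∑ j ∈ Finset.Ico ab n, (if j < a then h1 else if j < ab then h2 else h3)
      = (n - ab : ℕ) * h3 := by
    rw [Finset.sum_congr rfl (fun j hj => by
      simp only [Finset.mem_Ico] at hj
      rw [if_neg (by omega), if_neg (by omega)])]
    simp [Nat.card_Ico]
  rw [e1, e2, e3]

/-- The Q-matrix mulVec in edge form. -/
lemma qmat_mulVec {n : ℕ} (G : SimpleGraph (Fin n)) [DecidableRel G.Adj] (x : Fin n → ℝ)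
    (u : Fin n) :
    (Matrix.of fun u v => (if u = v then (G.degree u : ℝ) else 0)
      + (if G.Adj u v then 1 else 0)).mulVec x u
      = ∑ v : Fin n, (if G.Adj u v then x u + x v else 0) := by
  simp only [Matrix.mulVec, dotProduct, Matrix.of_apply]
  have : ∀ v : Fin n, ((if u = v then (G.degree u : ℝ) else 0)
      + (if G.Adj u v then 1 else 0)) * x v
      = (if u = v then (G.degree u : ℝ) * x v else 0) + (if G.Adj u v then x v else 0) := by
    intro v
    by_cases h1 : u = v <;> by_cases h2 : G.Adj u v <;> simp [h1, h2]
  rw [Finset.sum_congr rfl (fun v _ => this v), Finset.sum_add_distrib]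
  have e1 : ∑ v : Fin n, (if u = v then (G.degree u : ℝ) * x v else 0)
      = (G.degree u : ℝ) * x u := by
    rw [Finset.sum_ite_eq Finset.univ u (fun v => (G.degree u : ℝ) * x v)]
    simp
  have e2 : (G.degree u : ℝ) * x u = ∑ v : Fin n, (if G.Adj u v then x u else 0) := by
    rw [Finset.sum_ite, Finset.sum_const_zero, add_zero, Finset.sum_const, nsmul_eq_mul]
    congr 1
    rw [SimpleGraph.degree, ← SimpleGraph.neighborFinset_eq_filter]
  rw [e1, e2, ← Finset.sum_add_distrib]
  apply Finset.sum_congr rfl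
  intro v _
  by_cases h : G.Adj u v <;> simp [h]

end ClassSum
lemma qRad_eq {n : ℕ} (G : SimpleGraph (Fin n)) [DecidableRel G.Adj] :
    qRad G = specRadius (Matrix.of fun u v =>
      (if u = v then (G.degree u : ℝ) else 0) + (if G.Adj u v then 1 else 0)) := by
  unfold qRad
  congr!
section Root

/-- Strict antitonicity of the characteristic rational function. -/
lemma f_anti (A1 A2 aa C I x y : ℝ) (hC : 0 ≤ C) (hI : 0 ≤ I) (haa : 0 ≤ aa)
    (h1 : A2 < x) (h2 : aa < x) (hxy : x < y) :
    A1 + C*aa/(y - A2) + I*aa/(y - aa) - y < A1 + C*aa/(x - A2) + I*aa/(x - aa) - x := by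
  have d1 : C*aa/(y - A2) ≤ C*aa/(x - A2) := by
    apply div_le_div_of_nonneg_left (mul_nonneg hC haa) (by linarith) (by linarith)
  have d2 : I*aa/(y - aa) ≤ I*aa/(x - aa) := by
    apply div_le_div_of_nonneg_left (mul_nonneg hI haa) (by linarith) (by linarith)
  linarith

end Root

section RootExists

set_option maxHeartbeats 2000000 in
lemma f_root_exists (n a k : ℕ) (hk : 1 ≤ k) (ha : 2*k+1 ≤ a) (hn : 2*a - 2*k + 1 ≤ n) :
    ∃ ρ : ℝ, (2*(n:ℝ) - 3*a + 4*k - 4) < ρ ∧ (a:ℝ) < ρ ∧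
      ((n:ℝ) + a - 2) + ((n:ℝ) - 2*a + 2*k - 1)*a/(ρ - (2*(n:ℝ) - 3*a + 4*k - 4))
        + ((a:ℝ) - 2*k + 1)*a/(ρ - a) - ρ = 0 := by
  have hk' : (1:ℝ) ≤ k := by exact_mod_cast hk
  have ha' : 2*(k:ℝ)+1 ≤ a := by exact_mod_cast ha
  have hn' : 2*(a:ℝ) - 2*k + 1 ≤ n := by
    have : 2*a - 2*k + 1 ≤ n := hn
    have h2 : 2*k + 1 ≤ 2*a := by omega
    have : (2*a - 2*k + 1 : ℕ) + 2*k = 2*a + 1 := by omega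
    have hcast : ((2*a - 2*k + 1 : ℕ) : ℝ) + 2*k = 2*a + 1 := by exact_mod_cast this
    have hle : ((2*a - 2*k + 1 : ℕ) : ℝ) ≤ n := by exact_mod_cast hn
    linarith
  set A1 : ℝ := (n:ℝ) + a - 2 with hA1
  set A2 : ℝ := 2*(n:ℝ) - 3*a + 4*k - 4 with hA2
  set C : ℝ := (n:ℝ) - 2*a + 2*k - 1 with hC
  set I : ℝ := (a:ℝ) - 2*k + 1 with hI
  set F : ℝ → ℝ := fun x => A1 + C*(a:ℝ)/(x - A2) + I*(a:ℝ)/(x - (a:ℝ)) - x with hF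
  have ha3 : (3:ℝ) ≤ a := by linarith
  have hna : (a:ℝ) + 2 ≤ n := by linarith
  have hn5 : (5:ℝ) ≤ n := by linarith
  have hCpos : 0 ≤ C := by rw [hC]; linarith
  have hIpos : (2:ℝ) ≤ I := by rw [hI]; linarith
  have hA2a : (a:ℝ) - 2 ≤ A2 := by rw [hA2]; linarith
  have hA2pos : (1:ℝ) ≤ A2 := by linarith
  have hA1pos : (0:ℝ) ≤ A1 := by rw [hA1]; linarith
  set P : ℝ := max A2 (a:ℝ) with hP
  set ε : ℝ := (a:ℝ)/(4*n) with hε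
  have hεpos : 0 < ε := by
    apply div_pos (by linarith) (by linarith)
  have hε1 : ε ≤ 1 := by
    rw [hε, div_le_one (by linarith)]; linarith
  set x₀ : ℝ := P + ε with hx₀
  set X : ℝ := A1 + A2 + (a:ℝ) + C*a + I*a + 1 with hX
  have hPA2 : A2 ≤ P := le_max_left _ _
  have hPa : (a:ℝ) ≤ P := le_max_right _ _
  have hPle : P ≤ A2 + a := by
    apply max_le <;> linarith
  have hx₀X : x₀ ≤ X := by
    rw [hx₀, hX]
    have : 0 ≤ C*a := mul_nonneg hCpos (by linarith)
    have : 0 ≤ I*a := mul_nonneg (by linarith) (by linarith)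
    linarith
  have hcont : ContinuousOn F (Set.Icc x₀ X) := by
    apply ContinuousOn.sub _ continuousOn_id
    apply ContinuousOn.add
    apply ContinuousOn.add continuousOn_const
    · apply ContinuousOn.div continuousOn_const
      · exact (continuous_id.sub continuous_const).continuousOn
      · intro x hx
        have : x₀ ≤ x := hx.1
        have : A2 + ε ≤ x := by linarith
        intro hcon
        have : x = A2 := by linarith
        linarith
    · apply ContinuousOn.div continuousOn_const
      · exact (continuous_id.sub continuous_const).continuousOn
      · intro x hx
        have : x₀ ≤ x := hx.1
        have : (a:ℝ) + ε ≤ x := by linarith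
        intro hcon
        have : x = a := by linarith
        linarith
  have hFx₀ : 0 < F x₀ := by
    have haε : (a:ℝ)/ε = 4*n := by
      rw [hε]
      field_simp
    rcases le_or_gt A2 (a:ℝ) with hcase | hcase
    · have hPeq : P = (a:ℝ) := max_eq_right hcase
      have h1 : 0 ≤ C*(a:ℝ)/(x₀ - A2) := by
        apply div_nonneg (mul_nonneg hCpos (by linarith))
        rw [hx₀, hPeq]; linarith
      have h2 : I*(a:ℝ)/(x₀ - (a:ℝ)) = I*(4*n) := by
        rw [hx₀, hPeq]
        rw [show (a:ℝ) + ε - a = ε by ring]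
        rw [mul_div_assoc, haε]
      rw [hF]
      simp only
      rw [h2]
      have hxe : x₀ = a + ε := by rw [hx₀, hPeq]
      have hIm : 2*(4*(n:ℝ)) ≤ I*(4*n) := by
        apply mul_le_mul_of_nonneg_right hIpos (by linarith)
      rw [hxe] at h1 ⊢
      nlinarith [h1, hIm, hε1, hεpos]
    · -- a < A2, so C ≥ 1
      have hnat : 4*a + 4 < 2*n + 4*k := by
        have : (a:ℝ) < 2*(n:ℝ) - 3*a + 4*k - 4 := hcase
        have : 4*(a:ℝ) + 4 < 2*n + 4*k := by linarith
        exact_mod_cast this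
      have hC1 : (1:ℝ) ≤ C := by
        rw [hC]
        have : 2*a + 2 ≤ n + 2*k := by omega
        have : 2*(a:ℝ) + 2 ≤ n + 2*k := by exact_mod_cast this
        linarith
      have hPeq : P = A2 := max_eq_left (le_of_lt hcase)
      have h1 : C*(a:ℝ)/(x₀ - A2) = C*(4*n) := by
        rw [hx₀, hPeq, show A2 + ε - A2 = ε by ring, mul_div_assoc, haε]
      have h2 : 0 ≤ I*(a:ℝ)/(x₀ - (a:ℝ)) := by
        apply div_nonneg (mul_nonneg (by linarith) (by linarith))
        rw [hx₀, hPeq]; linarith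
      rw [hF]
      simp only
      rw [h1]
      have hxe : x₀ = A2 + ε := by rw [hx₀, hPeq]
      have hCm : 1*(4*(n:ℝ)) ≤ C*(4*n) := by
        apply mul_le_mul_of_nonneg_right hC1 (by linarith)
      rw [hxe] at h2 ⊢
      nlinarith [h2, hCm, hε1, hεpos]
  have hFX : F X < 0 := by
    have hd1 : (1:ℝ) ≤ X - A2 := by
      rw [hX]
      have : 0 ≤ C*a := mul_nonneg hCpos (by linarith)
      have : 0 ≤ I*a := mul_nonneg (by linarith) (by linarith)
      linarith
    have hd2 : (1:ℝ) ≤ X - a := by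
      rw [hX]
      have : 0 ≤ C*a := mul_nonneg hCpos (by linarith)
      have : 0 ≤ I*a := mul_nonneg (by linarith) (by linarith)
      linarith
    have h1 : C*(a:ℝ)/(X - A2) ≤ C*a := by
      apply div_le_self (mul_nonneg hCpos (by linarith)) hd1
    have h2 : I*(a:ℝ)/(X - (a:ℝ)) ≤ I*a := by
      apply div_le_self (mul_nonneg (by linarith) (by linarith)) hd2
    rw [hF]
    simp only
    rw [hX] at h1 h2 ⊢
    linarith
  have hmem : (0:ℝ) ∈ Set.Icc (F X) (F x₀) := ⟨le_of_lt hFX, le_of_lt hFx₀⟩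
  obtain ⟨ρ, hρmem, hρ⟩ := intermediate_value_Icc' hx₀X hcont hmem
  refine ⟨ρ, ?_, ?_, ?_⟩
  · have : x₀ ≤ ρ := hρmem.1
    rw [hx₀] at this
    linarith [hPA2, hεpos]
  · have : x₀ ≤ ρ := hρmem.1
    rw [hx₀] at this
    linarith [hPa, hεpos]
  · exact hρ

end RootExists
section Eig

lemma jud_adj_iff (n a b : ℕ) (u v : Fin n) :
    (jud n a b).Adj u v ↔ u ≠ v ∧ ((u : ℕ) < a ∨ (v : ℕ) < a ∨ ((u : ℕ) < a + b ∧ (v : ℕ) < a + b)) :=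
  Iff.rfl

set_option maxHeartbeats 2000000 in
lemma jud_qRad (n a k : ℕ) (hk : 1 ≤ k) (ha : 2*k+1 ≤ a) (hn : 2*a - 2*k + 1 ≤ n)
    (ρ : ℝ) (hρ2 : (2*(n:ℝ) - 3*a + 4*k - 4) < ρ) (hρa : (a:ℝ) < ρ)
    (hroot : ((n:ℝ) + a - 2) + ((n:ℝ) - 2*a + 2*k - 1)*a/(ρ - (2*(n:ℝ) - 3*a + 4*k - 4))
        + ((a:ℝ) - 2*k + 1)*a/(ρ - a) - ρ = 0) :
    qRad (jud n a (n - (2*a-2*k) - 1)) = ρ := by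
  set ca := n - (2*a-2*k) - 1 with hca
  set ab := a + ca with hab
  have hab1 : a ≤ ab := by omega
  have hab2 : ab ≤ n := by omega
  have hnpos : 0 < n := by omega
  -- cast identities
  have hcab : ((ab : ℕ) : ℝ) = (n:ℝ) - a + 2*k - 1 := by
    have : ab + a + 1 = n + 2*k := by omega
    have := congrArg (fun m : ℕ => (m : ℝ)) this
    push_cast at this
    linarith
  have hcca : ((ca : ℕ) : ℝ) = (n:ℝ) - 2*a + 2*k - 1 := by
    have : ca + 2*a + 1 = n + 2*k := by omega
    have := congrArg (fun m : ℕ => (m : ℝ)) this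
    push_cast at this
    linarith
  have hcaba : ((ab - a : ℕ) : ℝ) = (n:ℝ) - 2*a + 2*k - 1 := by
    have : (ab - a : ℕ) = ca := by omega
    rw [this, hcca]
  have hcnab : ((n - ab : ℕ) : ℝ) = (a:ℝ) - 2*k + 1 := by
    have : (n - ab) + 2*k = a + 1 := by omega
    have := congrArg (fun m : ℕ => (m : ℝ)) this
    push_cast at this
    linarith
  -- eigenvector values
  have hdq : (0:ℝ) < ρ - (2*(n:ℝ) - 3*a + 4*k - 4) := by linarith
  have hdr : (0:ℝ) < ρ - a := by linarith
  set qq : ℝ := (a:ℝ)/(ρ - (2*(n:ℝ) - 3*a + 4*k - 4)) with hqq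
  set rr : ℝ := (a:ℝ)/(ρ - a) with hrr
  have hapos : (0:ℝ) < a := by
    have : (3:ℕ) ≤ a := by omega
    have : (3:ℝ) ≤ a := by exact_mod_cast this
    linarith
  have hqpos : 0 < qq := div_pos hapos hdq
  have hrpos : 0 < rr := div_pos hapos hdr
  have hqe : qq * (ρ - (2*(n:ℝ) - 3*a + 4*k - 4)) = a := by
    rw [hqq, div_mul_cancel₀ _ hdq.ne']
  have hre : rr * (ρ - a) = a := by
    rw [hrr]; field_simp
  set x : Fin n → ℝ := fun v => if (v : ℕ) < a then 1 else if (v : ℕ) < ab then qq else rr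
    with hx
  have hxpos : ∀ u, 0 < x u := by
    intro u
    rw [hx]
    simp only
    split_ifs
    · exact one_pos
    · exact hqpos
    · exact hrpos
  have hsum_x : ∑ v : Fin n, x v = (a:ℝ) * 1 + ((n:ℝ) - 2*a + 2*k - 1) * qq
      + ((a:ℝ) - 2*k + 1) * rr := by
    rw [hx]
    rw [sum_classes n a ab hab1 hab2 1 qq rr, hcaba, hcnab]
  -- the matrix
  rw [qRad_eq]
  apply specRadius_eq_of_pos_eigenvector _ _ _ x ρ hxpos _ hnpos
  · -- symmetry
    intro u v
    simp only [Matrix.of_apply]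
    by_cases huv : u = v
    · subst huv; rfl
    · rw [if_neg huv, if_neg (Ne.symm huv)]
      congr 1
      by_cases h : (jud n a ca).Adj u v
      · rw [if_pos h, if_pos (h.symm)]
      · rw [if_neg h, if_neg (fun h' => h h'.symm)]
  · -- nonneg
    intro u v
    simp only [Matrix.of_apply]
    apply add_nonneg
    · split_ifs
      · exact Nat.cast_nonneg _
      · exact le_refl 0
    · split_ifs
      · exact zero_le_one
      · exact le_refl 0
  · -- eigen equation
    funext u
    rw [qmat_mulVec (jud n a ca) x u]
    simp only [Pi.smul_apply, smul_eq_mul]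
    by_cases hu1 : (u : ℕ) < a
    · -- u in the join part
      have hxu : x u = 1 := by rw [hx]; simp only; rw [if_pos hu1]
      have key : ∑ v : Fin n, (if (jud n a ca).Adj u v then x u + x v else 0)
          = (∑ v : Fin n, (x u + x v)) - (x u + x u) := by
        have e1 : ∑ v : Fin n, (if (jud n a ca).Adj u v then x u + x v else 0)
            = ∑ v ∈ Finset.univ.erase u, (x u + x v) := by
          rw [← Finset.sum_erase_add _ _ (Finset.mem_univ u),
              if_neg ((jud n a ca).irrefl), add_zero]
          exact Finset.sum_congr rfl (fun v hv => if_pos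
            ⟨fun h => (Finset.mem_erase.mp hv).1 h.symm, Or.inl hu1⟩)
        have e2 : (∑ v ∈ Finset.univ.erase u, (x u + x v)) + (x u + x u)
            = ∑ v : Fin n, (x u + x v) :=
          Finset.sum_erase_add _ _ (Finset.mem_univ u)
        rw [e1]
        linarith [e2]
      rw [key]
      rw [Finset.sum_add_distrib, Finset.sum_const, Finset.card_univ, Fintype.card_fin,
          hsum_x, hxu]
      simp only [nsmul_eq_mul, mul_one]
      linear_combination hroot
    · by_cases hu2 : (u : ℕ) < ab
      · -- middle clique
        have hxu : x u = qq := by rw [hx]; simp only; rw [if_neg hu1, if_pos hu2]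
        have hAdj : ∀ v : Fin n, v ≠ u → ((jud n a ca).Adj u v ↔ (v : ℕ) < ab) := by
          intro v hv
          constructor
          · rintro ⟨-, h | h | h⟩
            · omega
            · omega
            · exact h.2
          · intro h
            refine ⟨fun h' => hv h'.symm, ?_⟩
            by_cases hva : (v:ℕ) < a
            · exact Or.inr (Or.inl hva)
            · exact Or.inr (Or.inr ⟨hu2, h⟩)
        have key : ∑ v : Fin n, (if (jud n a ca).Adj u v then x u + x v else 0)
            = (∑ v : Fin n, (if (v:ℕ) < ab then x u + x v else 0)) - (x u + x u) := by
          have e1 : ∑ v : Fin n, (if (jud n a ca).Adj u v then x u + x v else 0)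
              = ∑ v ∈ Finset.univ.erase u, (if (v:ℕ) < ab then x u + x v else 0) := by
            rw [← Finset.sum_erase_add _ _ (Finset.mem_univ u),
                if_neg ((jud n a ca).irrefl), add_zero]
            exact Finset.sum_congr rfl (fun v hv =>
              if_congr (hAdj v (Finset.mem_erase.mp hv).1) rfl rfl)
          have e2 : (∑ v ∈ Finset.univ.erase u, (if (v:ℕ) < ab then x u + x v else 0))
              + (if (u:ℕ) < ab then x u + x u else 0)
              = ∑ v : Fin n, (if (v:ℕ) < ab then x u + x v else 0) :=
            Finset.sum_erase_add _ _ (Finset.mem_univ u)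
          rw [if_pos hu2] at e2
          rw [e1]
          linarith [e2]
        have hclass : ∑ v : Fin n, (if (v:ℕ) < ab then x u + x v else 0)
            = (a:ℝ) * (x u + 1) + ((n:ℝ) - 2*a + 2*k - 1) * (x u + qq)
              + ((a:ℝ) - 2*k + 1) * 0 := by
          rw [Finset.sum_congr rfl (fun v _ => by
            show (if (v:ℕ) < ab then x u + x v else 0)
              = (if (v:ℕ) < a then x u + 1 else if (v:ℕ) < ab then x u + qq else 0)
            by_cases h1 : (v:ℕ) < a
            · rw [if_pos (by omega), if_pos h1]
              have : x v = 1 := by rw [hx]; simp only; rw [if_pos h1]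
              rw [this]
            · by_cases h2 : (v:ℕ) < ab
              · rw [if_pos h2, if_neg h1, if_pos h2]
                have : x v = qq := by rw [hx]; simp only; rw [if_neg h1, if_pos h2]
                rw [this]
              · rw [if_neg h2, if_neg h1, if_neg h2])]
          rw [sum_classes n a ab hab1 hab2 _ _ 0, hcaba, hcnab]
        rw [key, hclass, hxu]
        linear_combination -hqe
      · -- independent part
        have hxu : x u = rr := by rw [hx]; simp only; rw [if_neg hu1, if_neg hu2]
        have hAdj : ∀ v : Fin n, ((jud n a ca).Adj u v ↔ (v : ℕ) < a) := by
          intro v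
          constructor
          · rintro ⟨hne, h | h | h⟩
            · omega
            · exact h
            · omega
          · intro h
            refine ⟨?_, Or.inr (Or.inl h)⟩
            intro h'
            rw [h'] at hu1
            omega
        have hclass : ∑ v : Fin n, (if (jud n a ca).Adj u v then x u + x v else 0)
            = (a:ℝ) * (x u + 1) + ((n:ℝ) - 2*a + 2*k - 1) * 0
              + ((a:ℝ) - 2*k + 1) * 0 := by
          rw [Finset.sum_congr rfl (fun v _ => by
            show (if (jud n a ca).Adj u v then x u + x v else 0)
              = (if (v:ℕ) < a then x u + 1 else if (v:ℕ) < ab then 0 else 0)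
            by_cases h1 : (v:ℕ) < a
            · rw [if_pos ((hAdj v).mpr h1), if_pos h1]
              have : x v = 1 := by rw [hx]; simp only; rw [if_pos h1]
              rw [this]
            · rw [if_neg (fun h => h1 ((hAdj v).mp h)), if_neg h1]
              split_ifs <;> rfl)]
          rw [sum_classes n a ab hab1 hab2 _ 0 0, hcaba, hcnab]
        rw [hclass, hxu]
        linear_combination -hre

end Eig
section Compare

set_option maxHeartbeats 2000000 in
lemma jud_compare (n d s k : ℕ) (hk : 1 ≤ k) (hd : 2*k+1 ≤ d) (hds : d < s)
    (hn1 : 2*s - 2*k + 1 ≤ n) (hn2 : 13*d ≤ 2*n) :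
    qRad (jud n s (n - (2*s-2*k) - 1)) < qRad (jud n d (n - (2*d-2*k) - 1)) := by
  have hs' : 2*k+1 ≤ s := by omega
  have hnd : 2*d - 2*k + 1 ≤ n := by omega
  obtain ⟨ρs, hρs2, hρsa, hroots⟩ := f_root_exists n s k hk hs' hn1
  obtain ⟨ρd, hρd2, hρda, hrootd⟩ := f_root_exists n d k hk hd hnd
  rw [jud_qRad n s k hk hs' hn1 ρs hρs2 hρsa hroots,
      jud_qRad n d k hk hd hnd ρd hρd2 hρda hrootd]
  -- real casts
  have hkR : (1:ℝ) ≤ k := by exact_mod_cast hk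
  have hdR : 2*(k:ℝ)+1 ≤ d := by exact_mod_cast hd
  have hsR : (d:ℝ)+1 ≤ s := by exact_mod_cast hds
  have hn1R : 2*(s:ℝ) - 2*k + 1 ≤ n := by
    have h2 : (2*s - 2*k + 1 : ℕ) + 2*k = 2*s + 1 := by omega
    have hcast : ((2*s - 2*k + 1 : ℕ) : ℝ) + 2*k = 2*s + 1 := by exact_mod_cast h2
    have hle : ((2*s - 2*k + 1 : ℕ) : ℝ) ≤ n := by exact_mod_cast hn1
    linarith
  have hn2R : 13*(d:ℝ) ≤ 2*n := by exact_mod_cast hn2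
  set L : ℝ := 2*(n:ℝ) - 2*d + 4*k - 4 with hL
  have hA2d_pos : (0:ℝ) < 2*(n:ℝ) - 3*d + 4*k - 4 := by linarith
  have hdpos : (0:ℝ) < d := by linarith
  have hIdpos : (0:ℝ) < (d:ℝ) - 2*k + 1 := by linarith
  have hLA2d : L - (2*(n:ℝ) - 3*d + 4*k - 4) = d := by rw [hL]; ring
  have hLd : L - (d:ℝ) = 2*(n:ℝ) - 3*d + 4*k - 4 := by rw [hL]; ring
  -- f_d (L) > 0
  have hfdL : 0 < ((n:ℝ) + d - 2) + ((n:ℝ) - 2*d + 2*k - 1)*d/(L - (2*(n:ℝ) - 3*d + 4*k - 4))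
      + ((d:ℝ) - 2*k + 1)*d/(L - d) - L := by
    rw [hLA2d, hLd]
    have e1 : ((n:ℝ) - 2*d + 2*k - 1)*d/d = (n:ℝ) - 2*d + 2*k - 1 := by
      field_simp
    rw [e1]
    have e2 : 0 < ((d:ℝ) - 2*k + 1)*d/(2*(n:ℝ) - 3*d + 4*k - 4) :=
      div_pos (mul_pos hIdpos hdpos) hA2d_pos
    linarith
  -- ρd > L
  have hρdL : L < ρd := by
    by_contra hcon
    push_neg at hcon
    rcases lt_or_eq_of_le hcon with hlt | heq
    · have := f_anti ((n:ℝ) + d - 2) (2*(n:ℝ) - 3*d + 4*k - 4) (d:ℝ)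
        ((n:ℝ) - 2*d + 2*k - 1) ((d:ℝ) - 2*k + 1) ρd L
        (by linarith) (by linarith) (by linarith) hρd2 hρda hlt
      have hfd0 : ((n:ℝ) + d - 2) + ((n:ℝ) - 2*d + 2*k - 1)*d/(ρd - (2*(n:ℝ) - 3*d + 4*k - 4))
          + ((d:ℝ) - 2*k + 1)*d/(ρd - d) - ρd = 0 := hrootd
      have hLA2d' : (2*(n:ℝ) - 3*d + 4*k - 4) < L := by linarith
      have hLd' : (d:ℝ) < L := by linarith
      linarith [hfdL]
    · rw [heq] at hrootd
      linarith [hfdL, hrootd]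
  -- positivity of denominators at ρd for the s-function
  have hρdA2s : (2*(n:ℝ) - 3*s + 4*k - 4) < ρd := by
    have : (2*(n:ℝ) - 3*s + 4*k - 4) ≤ L := by rw [hL]; linarith
    linarith
  have hρds : (s:ℝ) < ρd := by
    have : (s:ℝ) + 1 ≤ L := by rw [hL]; linarith
    linarith
  have hD1 : (0:ℝ) < ρd - (2*(n:ℝ) - 3*s + 4*k - 4) := by linarith
  have hD2 : (0:ℝ) < ρd - s := by linarith
  have hD1d : (0:ℝ) < ρd - (2*(n:ℝ) - 3*d + 4*k - 4) := by linarith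
  have hD2d : (0:ℝ) < ρd - d := by linarith
  -- phi_d (ρd) = 0
  have hφd : (ρd - ((n:ℝ)+d-2)) * (ρd - (2*(n:ℝ) - 3*d + 4*k - 4)) * (ρd - d)
      - ((n:ℝ) - 2*d + 2*k - 1)*d*(ρd - d) - ((d:ℝ) - 2*k + 1)*d*(ρd - (2*(n:ℝ) - 3*d + 4*k - 4))
      = 0 := by
    have e1 : ((n:ℝ) - 2*d + 2*k - 1)*d/(ρd - (2*(n:ℝ) - 3*d + 4*k - 4))
        * (ρd - (2*(n:ℝ) - 3*d + 4*k - 4)) = ((n:ℝ) - 2*d + 2*k - 1)*d :=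
      div_mul_cancel₀ _ (ne_of_gt hD1d)
    have e2 : ((d:ℝ) - 2*k + 1)*d/(ρd - d) * (ρd - d) = ((d:ℝ) - 2*k + 1)*d :=
      div_mul_cancel₀ _ (ne_of_gt hD2d)
    linear_combination (ρd - (d:ℝ))*e1 + (ρd - (2*(n:ℝ) - 3*d + 4*k - 4))*e2
      - ((ρd - (2*(n:ℝ) - 3*d + 4*k - 4))*(ρd - (d:ℝ)))*hrootd
  -- quadratic positivity at ρd
  have hG : 0 < 4*(n:ℝ)^2 - 4*n*s - 14*n*d + 28*n*k - 18*n - 2*(s:ℝ)^2 + 6*s*d - 8*s*k + 6*s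
      + 10*(d:ℝ)^2 - 40*d*k + 30*d + 40*(k:ℝ)^2 - 60*k + 20 := by
    nlinarith [mul_nonneg (by linarith : (0:ℝ) ≤ 2*(n:ℝ)-13*d) (by linarith : (0:ℝ) ≤ (n:ℝ)-2*s+2*k-1),
      mul_nonneg (by linarith : (0:ℝ) ≤ 2*(n:ℝ)-13*d) (by linarith : (0:ℝ) ≤ (s:ℝ)-d-1),
      mul_nonneg (by linarith : (0:ℝ) ≤ 2*(n:ℝ)-13*d) (by linarith : (0:ℝ) ≤ (d:ℝ)-2*k-1),
      mul_nonneg (by linarith : (0:ℝ) ≤ 2*(n:ℝ)-13*d) (by linarith : (0:ℝ) ≤ (k:ℝ)-1),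
      mul_nonneg (by linarith : (0:ℝ) ≤ (n:ℝ)-2*s+2*k-1) (by linarith : (0:ℝ) ≤ (s:ℝ)-d-1),
      mul_nonneg (by linarith : (0:ℝ) ≤ (n:ℝ)-2*s+2*k-1) (by linarith : (0:ℝ) ≤ (d:ℝ)-2*k-1),
      mul_nonneg (by linarith : (0:ℝ) ≤ (n:ℝ)-2*s+2*k-1) (by linarith : (0:ℝ) ≤ (k:ℝ)-1),
      mul_nonneg (by linarith : (0:ℝ) ≤ (s:ℝ)-d-1) (by linarith : (0:ℝ) ≤ (d:ℝ)-2*k-1),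
      mul_nonneg (by linarith : (0:ℝ) ≤ (s:ℝ)-d-1) (by linarith : (0:ℝ) ≤ (k:ℝ)-1),
      mul_nonneg (by linarith : (0:ℝ) ≤ (d:ℝ)-2*k-1) (by linarith : (0:ℝ) ≤ (k:ℝ)-1),
      sq_nonneg (2*(n:ℝ)-13*d), sq_nonneg ((n:ℝ)-2*s+2*k-1), sq_nonneg ((s:ℝ)-d-1),
      sq_nonneg ((d:ℝ)-2*k-1), sq_nonneg ((k:ℝ)-1)]
  have hGq : 0 < ρd^2 + ((n:ℝ) - 4*s - 4*d + 8*k - 4)*ρd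
      + (-2*(n:ℝ)^2 + 4*(s+d)*n - 8*k*n + 10*n - 2*((s:ℝ)^2+s*d+(d:ℝ)^2) + 8*k*(s+(d:ℝ))
        - 10*(s+(d:ℝ)) - 8*(k:ℝ)^2 + 20*k - 12) := by
    have hfac : ρd^2 + ((n:ℝ) - 4*s - 4*d + 8*k - 4)*ρd
        + (-2*(n:ℝ)^2 + 4*(s+d)*n - 8*k*n + 10*n - 2*((s:ℝ)^2+s*d+(d:ℝ)^2) + 8*k*(s+(d:ℝ))
          - 10*(s+(d:ℝ)) - 8*(k:ℝ)^2 + 20*k - 12)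
        = (L^2 + ((n:ℝ) - 4*s - 4*d + 8*k - 4)*L
          + (-2*(n:ℝ)^2 + 4*(s+d)*n - 8*k*n + 10*n - 2*((s:ℝ)^2+s*d+(d:ℝ)^2) + 8*k*(s+(d:ℝ))
            - 10*(s+(d:ℝ)) - 8*(k:ℝ)^2 + 20*k - 12))
          + (ρd - L)*(ρd + L + ((n:ℝ) - 4*s - 4*d + 8*k - 4)) := by ring
    have hGL : L^2 + ((n:ℝ) - 4*s - 4*d + 8*k - 4)*L
        + (-2*(n:ℝ)^2 + 4*(s+d)*n - 8*k*n + 10*n - 2*((s:ℝ)^2+s*d+(d:ℝ)^2) + 8*k*(s+(d:ℝ))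
          - 10*(s+(d:ℝ)) - 8*(k:ℝ)^2 + 20*k - 12)
        = 4*(n:ℝ)^2 - 4*n*s - 14*n*d + 28*n*k - 18*n - 2*(s:ℝ)^2 + 6*s*d - 8*s*k + 6*s
          + 10*(d:ℝ)^2 - 40*d*k + 30*d + 40*(k:ℝ)^2 - 60*k + 20 := by
      rw [hL]; ring
    have hsec : 0 ≤ ρd + L + ((n:ℝ) - 4*s - 4*d + 8*k - 4) := by
      have : 0 ≤ 2*L + ((n:ℝ) - 4*s - 4*d + 8*k - 4) := by rw [hL]; linarith
      linarith
    rw [hfac, hGL]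
    have : 0 ≤ (ρd - L)*(ρd + L + ((n:ℝ) - 4*s - 4*d + 8*k - 4)) :=
      mul_nonneg (by linarith) hsec
    linarith
  -- phi_s (ρd) > 0
  have hφs : 0 < (ρd - ((n:ℝ)+s-2)) * (ρd - (2*(n:ℝ) - 3*s + 4*k - 4)) * (ρd - s)
      - ((n:ℝ) - 2*s + 2*k - 1)*s*(ρd - s) - ((s:ℝ) - 2*k + 1)*s*(ρd - (2*(n:ℝ) - 3*s + 4*k - 4)) := by
    have hdiff : (ρd - ((n:ℝ)+s-2)) * (ρd - (2*(n:ℝ) - 3*s + 4*k - 4)) * (ρd - s)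
        - ((n:ℝ) - 2*s + 2*k - 1)*s*(ρd - s) - ((s:ℝ) - 2*k + 1)*s*(ρd - (2*(n:ℝ) - 3*s + 4*k - 4))
        = ((ρd - ((n:ℝ)+d-2)) * (ρd - (2*(n:ℝ) - 3*d + 4*k - 4)) * (ρd - d)
          - ((n:ℝ) - 2*d + 2*k - 1)*d*(ρd - d) - ((d:ℝ) - 2*k + 1)*d*(ρd - (2*(n:ℝ) - 3*d + 4*k - 4)))
          + ((s:ℝ) - d) * (ρd^2 + ((n:ℝ) - 4*s - 4*d + 8*k - 4)*ρd
            + (-2*(n:ℝ)^2 + 4*(s+d)*n - 8*k*n + 10*n - 2*((s:ℝ)^2+s*d+(d:ℝ)^2) + 8*k*(s+(d:ℝ))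
              - 10*(s+(d:ℝ)) - 8*(k:ℝ)^2 + 20*k - 12)) := by ring
    rw [hdiff, hφd]
    have : 0 < (s:ℝ) - d := by linarith
    have := mul_pos this hGq
    linarith
  -- f_s (ρd) < 0
  have hfsρd : ((n:ℝ) + s - 2) + ((n:ℝ) - 2*s + 2*k - 1)*s/(ρd - (2*(n:ℝ) - 3*s + 4*k - 4))
      + ((s:ℝ) - 2*k + 1)*s/(ρd - s) - ρd < 0 := by
    by_contra hcon
    push_neg at hcon
    have hprod : (((n:ℝ) + s - 2) + ((n:ℝ) - 2*s + 2*k - 1)*s/(ρd - (2*(n:ℝ) - 3*s + 4*k - 4))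
        + ((s:ℝ) - 2*k + 1)*s/(ρd - s) - ρd) * ((ρd - (2*(n:ℝ) - 3*s + 4*k - 4)) * (ρd - s))
        = -((ρd - ((n:ℝ)+s-2)) * (ρd - (2*(n:ℝ) - 3*s + 4*k - 4)) * (ρd - s)
          - ((n:ℝ) - 2*s + 2*k - 1)*s*(ρd - s)
          - ((s:ℝ) - 2*k + 1)*s*(ρd - (2*(n:ℝ) - 3*s + 4*k - 4))) := by
      have e1 : ((n:ℝ) - 2*s + 2*k - 1)*s/(ρd - (2*(n:ℝ) - 3*s + 4*k - 4))
          * (ρd - (2*(n:ℝ) - 3*s + 4*k - 4)) = ((n:ℝ) - 2*s + 2*k - 1)*s :=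
        div_mul_cancel₀ _ (ne_of_gt hD1)
      have e2 : ((s:ℝ) - 2*k + 1)*s/(ρd - s) * (ρd - s) = ((s:ℝ) - 2*k + 1)*s :=
        div_mul_cancel₀ _ (ne_of_gt hD2)
      linear_combination (ρd - (s:ℝ))*e1 + (ρd - (2*(n:ℝ) - 3*s + 4*k - 4))*e2
    have hpos : 0 ≤ (((n:ℝ) + s - 2) + ((n:ℝ) - 2*s + 2*k - 1)*s/(ρd - (2*(n:ℝ) - 3*s + 4*k - 4))
        + ((s:ℝ) - 2*k + 1)*s/(ρd - s) - ρd) * ((ρd - (2*(n:ℝ) - 3*s + 4*k - 4)) * (ρd - s)) :=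
      mul_nonneg hcon (le_of_lt (mul_pos hD1 hD2))
    linarith
  -- conclude
  by_contra hcon
  push_neg at hcon
  rcases lt_or_eq_of_le hcon with hlt | heq
  · have := f_anti ((n:ℝ) + s - 2) (2*(n:ℝ) - 3*s + 4*k - 4) (s:ℝ)
      ((n:ℝ) - 2*s + 2*k - 1) ((s:ℝ) - 2*k + 1) ρd ρs
      (by linarith) (by linarith) (by linarith) hρdA2s hρds hlt
    linarith [hroots, hfsρd]
  · rw [← heq] at hroots
    linarith [hroots, hfsρd]

end Compare
theorem stmt9 (d s n k : ℕ) (hk : 1 ≤ k) (hd : 2 * k + 1 ≤ d) (hs : d ≤ s)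
    (hn1 : 2 * s - 2 * k + 1 ≤ n) (hn2 : 13 * d ≤ 2 * n) :
    qRad (jud n s (n - (2 * s - 2 * k) - 1)) ≤ qRad (jud n d (n - (2 * d - 2 * k) - 1)) ∧
      (qRad (jud n s (n - (2 * s - 2 * k) - 1)) = qRad (jud n d (n - (2 * d - 2 * k) - 1)) ↔
        s = d) := by
  rcases eq_or_lt_of_le hs with heq | hlt
  · subst heq
    exact ⟨le_refl _, by simp⟩
  · have h := jud_compare n d s k hk hd hlt hn1 hn2
    refine ⟨le_of_lt h, ⟨fun he => absurd he (ne_of_lt h), fun he => by omega⟩⟩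
end
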